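/- Any comparison-based quantum algorithm for element distinctness on N elements with error probability at most ε requires at least (1 − 2√(ε(1−ε)))·√N·(H_N − 1)/(2π) comparisons. -/

import Mathlib

open scoped BigOperators

noncomputable section EDModel

/-- The comparison phase oracle for the input list `x`: a basis vector `b` comparing
the pair `idx b = (i, i')` picks up the sign `(−1)^{[x_i < x_{i'}]}`. -/
def cmpOracleApply (N M : ℕ) (x : Fin N → ℕ) (idx : Fin M → Fin N × Fin N)
    (ψ : EuclideanSpace ℂ (Fin M)) : EuclideanSpace ℂ (Fin M) :=
  WithLp.toLp 2 (fun b => (if x (idx b).1 < x (idx b).2 then (-1 : ℂ) else 1) * ψ b)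

/-- The state `(U O_x)^j U |init⟩` of the algorithm after `j` comparisons. -/
def cmpStateAfter (N M : ℕ)
    (U : EuclideanSpace ℂ (Fin M) ≃ₗᵢ[ℂ] EuclideanSpace ℂ (Fin M))
    (idx : Fin M → Fin N × Fin N) (x : Fin N → ℕ)
    (init : EuclideanSpace ℂ (Fin M)) : ℕ → EuclideanSpace ℂ (Fin M)
  | 0 => U init
  | j + 1 => U (cmpOracleApply N M x idx (cmpStateAfter N M U idx x init j))

/-- Probability that measuring `ψ` in the computational basis yields answer `v`. -/
def successProb {M : ℕ} {α : Type} [DecidableEq α] (ans : Fin M → α) (v : α)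
    (ψ : EuclideanSpace ℂ (Fin M)) : ℝ :=
  ∑ b ∈ Finset.univ.filter (fun b => ans b = v), ‖ψ b‖ ^ 2

end EDModel



open Finset Real

noncomputable section EDAux

/-- Mean value inequality for arctan. -/
lemma ED.arctan_diff {a b : ℝ} (ha : 0 ≤ a) (hab : a ≤ b) :
    (b - a) / (1 + b ^ 2) ≤ Real.arctan b - Real.arctan a := by
  rcases eq_or_lt_of_le hab with rfl | hlt
  · simp
  obtain ⟨c, hc, hceq⟩ := exists_hasDerivAt_eq_slope Real.arctan (fun x => 1 / (1 + x ^ 2)) hlt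
    (Real.continuous_arctan.continuousOn) (fun x _ => Real.hasDerivAt_arctan x)
  have hc1 : c ≤ b := le_of_lt hc.2
  have hc0 : 0 ≤ c := le_trans ha (le_of_lt hc.1)
  have h1 : 1 / (1 + b ^ 2) ≤ 1 / (1 + c ^ 2) := by
    apply one_div_le_one_div_of_le
    · positivity
    · nlinarith
  have hba : 0 < b - a := by linarith
  calc (b - a) / (1 + b ^ 2) = (b - a) * (1 / (1 + b ^ 2)) := by ring
    _ ≤ (b - a) * ((Real.arctan b - Real.arctan a) / (b - a)) := by
        apply mul_le_mul_of_nonneg_left _ (le_of_lt hba)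
        rw [← hceq]; exact h1
    _ = Real.arctan b - Real.arctan a := by field_simp

lemma ED.sqrt_gap (n : ℕ) :
    1 / Real.sqrt (2 * (n+1) + 1) ≤ Real.sqrt (2 * (n+1) + 1) - Real.sqrt (2 * n + 1) := by
  have hx : (0:ℝ) < 2 * n + 1 := by positivity
  have hy : (0:ℝ) < 2 * (n+1) + 1 := by positivity
  have hsy : 0 < Real.sqrt (2 * (n+1) + 1) := Real.sqrt_pos.2 hy
  have key : Real.sqrt (2 * n + 1) * Real.sqrt (2 * (n+1) + 1) ≤ 2 * n + 2 := by
    rw [← Real.sqrt_mul (le_of_lt hx)]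
    have h2 : Real.sqrt ((2 * n + 1) * (2 * (n+1) + 1)) ≤ Real.sqrt ((2*(n:ℝ)+2)^2) := by
      apply Real.sqrt_le_sqrt; nlinarith
    calc Real.sqrt ((2 * n + 1) * (2 * (n+1) + 1)) ≤ Real.sqrt ((2*(n:ℝ)+2)^2) := h2
      _ = 2*(n:ℝ)+2 := Real.sqrt_sq (by positivity)
  rw [div_le_iff₀ hsy, sub_mul, Real.mul_self_sqrt (le_of_lt hy)]
  nlinarith

/-- The basic Hilbert-matrix-type term. -/
def ED.hterm (m n : ℕ) : ℝ :=
  1 / (m + n + 1) * (Real.sqrt (2 * m + 1) / Real.sqrt (2 * n + 1))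

lemma ED.hterm_nonneg (m n : ℕ) : 0 ≤ ED.hterm m n := by
  unfold ED.hterm; positivity

private lemma ED.claim1' (m n : ℕ) (c : ℝ) (hc : 0 < c) (hcsq : c ^ 2 = 2 * (m:ℝ) + 1) :
    1 / ((m:ℝ) + ((n:ℝ)+1) + 1) * (c / Real.sqrt (2 * ((n:ℝ)+1) + 1)) ≤
      2 * Real.arctan (Real.sqrt (2 * ((n:ℝ)+1) + 1) / c)
        - 2 * Real.arctan (Real.sqrt (2 * (n:ℝ) + 1) / c) := by
  have hsx : (0:ℝ) ≤ Real.sqrt (2 * (n:ℝ) + 1) := Real.sqrt_nonneg _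
  have hsy : (0:ℝ) < Real.sqrt (2 * ((n:ℝ)+1) + 1) := Real.sqrt_pos.2 (by positivity)
  have hsyq : Real.sqrt (2 * ((n:ℝ)+1) + 1) ^ 2 = 2 * ((n:ℝ)+1) + 1 :=
    Real.sq_sqrt (by positivity)
  have ha0 : 0 ≤ Real.sqrt (2 * (n:ℝ) + 1) / c := by positivity
  have hab : Real.sqrt (2 * (n:ℝ) + 1) / c ≤ Real.sqrt (2 * ((n:ℝ)+1) + 1) / c := by
    have hmono : Real.sqrt (2 * (n:ℝ) + 1) ≤ Real.sqrt (2 * ((n:ℝ)+1) + 1) :=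
      Real.sqrt_le_sqrt (by linarith)
    exact (div_le_div_iff_of_pos_right hc).2 hmono
  have harctan := ED.arctan_diff ha0 hab
  have hgap : 1 / Real.sqrt (2 * ((n:ℝ)+1) + 1)
      ≤ Real.sqrt (2 * ((n:ℝ)+1) + 1) - Real.sqrt (2 * (n:ℝ) + 1) := by
    have := ED.sqrt_gap n
    push_cast at this ⊢
    convert this using 3 <;> push_cast <;> ring
  have h1 : 1 / (Real.sqrt (2 * ((n:ℝ)+1) + 1) * c)
      ≤ Real.sqrt (2 * ((n:ℝ)+1) + 1) / c - Real.sqrt (2 * (n:ℝ) + 1) / c := by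
    rw [div_sub_div_same]
    calc 1 / (Real.sqrt (2 * ((n:ℝ)+1) + 1) * c)
        = (1 / Real.sqrt (2 * ((n:ℝ)+1) + 1)) / c := by ring
      _ ≤ (Real.sqrt (2 * ((n:ℝ)+1) + 1) - Real.sqrt (2 * (n:ℝ) + 1)) / c := by gcongr
  have hbsq : 1 + (Real.sqrt (2 * ((n:ℝ)+1) + 1) / c) ^ 2
      = (2 * ((m:ℝ) + ((n:ℝ)+1) + 1)) / (2 * (m:ℝ) + 1) := by
    rw [div_pow, hsyq]
    field_simp
    linear_combination (-(3:ℝ) - 2*(n:ℝ)) * hcsq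
  have E : 2 * ((1 / (Real.sqrt (2 * ((n:ℝ)+1) + 1) * c))
        / ((2 * ((m:ℝ) + ((n:ℝ)+1) + 1)) / (2 * (m:ℝ) + 1)))
      = 1 / ((m:ℝ) + ((n:ℝ)+1) + 1) * (c / Real.sqrt (2 * ((n:ℝ)+1) + 1)) := by
    rw [← hcsq]
    have h3 : Real.sqrt (2 * ((n:ℝ)+1) + 1) ≠ 0 := ne_of_gt hsy
    have h4 : c ≠ 0 := ne_of_gt hc
    have h5 : (m:ℝ) + ((n:ℝ)+1) + 1 ≠ 0 := by positivity
    field_simp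
    try ring
  have h2 : 1 / ((m:ℝ) + ((n:ℝ)+1) + 1) * (c / Real.sqrt (2 * ((n:ℝ)+1) + 1))
      ≤ 2 * ((Real.sqrt (2 * ((n:ℝ)+1) + 1) / c - Real.sqrt (2 * (n:ℝ) + 1) / c)
        / (1 + (Real.sqrt (2 * ((n:ℝ)+1) + 1) / c) ^ 2)) := by
    rw [hbsq, ← E]
    have hpos : (0:ℝ) < (2 * ((m:ℝ) + ((n:ℝ)+1) + 1)) / (2 * (m:ℝ) + 1) := by positivity
    gcongr
  linarith

/-- Row bound for the (shifted) Hilbert matrix with Schur weights. -/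
lemma ED.hilbertRow (m K : ℕ) :
    ∑ n ∈ Finset.range K, ED.hterm m n ≤ Real.pi + 1 := by
  have hc : (0:ℝ) < Real.sqrt (2 * m + 1) := Real.sqrt_pos.2 (by positivity)
  have hcsq : Real.sqrt (2 * (m:ℝ) + 1) ^ 2 = 2 * (m:ℝ) + 1 := Real.sq_sqrt (by positivity)
  set g : ℕ → ℝ := fun n => 2 * Real.arctan (Real.sqrt (2 * n + 1) / Real.sqrt (2 * (m:ℝ) + 1))
    with hg
  have claim1 : ∀ n : ℕ, ED.hterm m (n + 1) ≤ g (n + 1) - g n := by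
    intro n
    have h := ED.claim1' m n _ hc hcsq
    have e0 : ED.hterm m (n+1)
        = 1 / ((m:ℝ) + ((n:ℝ)+1) + 1) * (Real.sqrt (2 * (m:ℝ) + 1) / Real.sqrt (2 * ((n:ℝ)+1) + 1)) := by
      unfold ED.hterm; push_cast; ring_nf
    have e1 : g (n+1) = 2 * Real.arctan (Real.sqrt (2 * ((n:ℝ)+1) + 1) / Real.sqrt (2 * (m:ℝ) + 1)) := by
      simp only [hg]; push_cast; ring_nf
    have e2 : g n = 2 * Real.arctan (Real.sqrt (2 * (n:ℝ) + 1) / Real.sqrt (2 * (m:ℝ) + 1)) := by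
      simp only [hg]
    rw [e0, e1, e2]; linarith
  have tele : ∀ K : ℕ, ∑ n ∈ Finset.range (K+1), ED.hterm m n ≤ ED.hterm m 0 + (g K - g 0) := by
    intro K
    induction K with
    | zero => simp
    | succ K ih =>
      rw [Finset.sum_range_succ]
      have := claim1 K
      linarith
  cases K with
  | zero => simp; positivity
  | succ K =>
    have h0 : ED.hterm m 0 ≤ 1 := by
      unfold ED.hterm
      simp only [Nat.cast_zero, mul_zero, zero_add]
      rw [Real.sqrt_one]
      have hle : Real.sqrt (2 * (m:ℝ) + 1) ≤ (m:ℝ) + 1 := by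
        calc Real.sqrt (2 * (m:ℝ) + 1) ≤ Real.sqrt (((m:ℝ)+1)^2) := by
              apply Real.sqrt_le_sqrt; nlinarith
          _ = (m:ℝ)+1 := Real.sqrt_sq (by positivity)
      rw [div_one]
      calc 1 / ((m:ℝ) + 0 + 1) * Real.sqrt (2 * (m:ℝ) + 1)
          ≤ 1 / ((m:ℝ) + 0 + 1) * ((m:ℝ)+1) := by gcongr
        _ = 1 := by rw [add_zero]; field_simp
    have hK : g K ≤ Real.pi := by
      rw [hg]
      have := Real.arctan_lt_pi_div_two (Real.sqrt (2 * K + 1) / Real.sqrt (2 * (m:ℝ) + 1))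
      simp only
      linarith
    have hg0 : 0 ≤ g 0 := by
      rw [hg]
      have h5 : 0 ≤ Real.arctan (Real.sqrt (2 * (0:ℕ) + 1) / Real.sqrt (2 * (m:ℝ) + 1)) := by
        rw [← Real.arctan_zero]
        exact Real.arctan_strictMono.monotone (by positivity)
      simp only at h5 ⊢
      linarith
    calc ∑ n ∈ Finset.range (K+1), ED.hterm m n ≤ ED.hterm m 0 + (g K - g 0) := tele K
      _ ≤ 1 + (Real.pi - 0) := by linarith
      _ = Real.pi + 1 := by ring

end EDAux
noncomputable section EDPartB

variable {N M : ℕ} (U : EuclideanSpace ℂ (Fin M) ≃ₗᵢ[ℂ] EuclideanSpace ℂ (Fin M))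
  (idx : Fin M → Fin N × Fin N) (init : EuclideanSpace ℂ (Fin M))

lemma ED.oracle_apply (x : Fin N → ℕ) (ψ : EuclideanSpace ℂ (Fin M)) (b : Fin M) :
    cmpOracleApply N M x idx ψ b
      = (if x (idx b).1 < x (idx b).2 then (-1 : ℂ) else 1) * ψ b := rfl

lemma ED.oracle_coord_norm (x : Fin N → ℕ) (ψ : EuclideanSpace ℂ (Fin M)) (b : Fin M) :
    ‖cmpOracleApply N M x idx ψ b‖ = ‖ψ b‖ := by
  rw [ED.oracle_apply, norm_mul]
  split_ifs <;> simp

lemma ED.oracle_norm (x : Fin N → ℕ) (ψ : EuclideanSpace ℂ (Fin M)) :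
    ‖cmpOracleApply N M x idx ψ‖ = ‖ψ‖ := by
  rw [EuclideanSpace.norm_eq, EuclideanSpace.norm_eq]
  congr 1
  exact Finset.sum_congr rfl fun b _ => by rw [ED.oracle_coord_norm]

lemma ED.state_norm (hinit : ‖init‖ = 1) (x : Fin N → ℕ) (j : ℕ) :
    ‖cmpStateAfter N M U idx x init j‖ = 1 := by
  induction j with
  | zero => rw [cmpStateAfter, U.norm_map, hinit]
  | succ j ih => rw [cmpStateAfter, U.norm_map, ED.oracle_norm, ih]

lemma ED.state_sum_sq (hinit : ‖init‖ = 1) (x : Fin N → ℕ) (j : ℕ) :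
    ∑ b, ‖cmpStateAfter N M U idx x init j b‖ ^ 2 = 1 := by
  have h := ED.state_norm U idx init hinit x j
  rw [EuclideanSpace.norm_eq] at h
  have h2 : (0:ℝ) ≤ ∑ b, ‖cmpStateAfter N M U idx x init j b‖ ^ 2 :=
    Finset.sum_nonneg fun b _ => by positivity
  nlinarith [Real.sq_sqrt h2, h]

lemma ED.state_congr (x x' : Fin N → ℕ)
    (h : ∀ i j : Fin N, x i < x j ↔ x' i < x' j) (j : ℕ) :
    cmpStateAfter N M U idx x init j = cmpStateAfter N M U idx x' init j := by
  induction j with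
  | zero => rfl
  | succ j ih =>
    rw [cmpStateAfter, cmpStateAfter, ih]
    congr 1
    ext b
    rw [ED.oracle_apply, ED.oracle_apply]
    congr 1
    by_cases hb : x' (idx b).1 < x' (idx b).2
    · rw [if_pos ((h _ _).2 hb), if_pos hb]
    · rw [if_neg (fun hc => hb ((h _ _).1 hc)), if_neg hb]

/-- Two nearly-orthogonal-mass distributions: the inner product bound algebra. -/
lemma ED.two_dist {ε a1 a2 b1 b2 : ℝ} (hε0 : 0 ≤ ε) (hε1 : ε ≤ 1/2)
    (ha1 : 0 ≤ a1) (ha2 : 0 ≤ a2) (hb1 : 0 ≤ b1) (hb2 : 0 ≤ b2)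
    (hsa : a1 + a2 = 1) (hsb : b1 + b2 = 1) (h1 : a1 ≤ ε) (h2 : b2 ≤ ε) :
    Real.sqrt a1 * Real.sqrt b1 + Real.sqrt a2 * Real.sqrt b2
      ≤ 2 * Real.sqrt (ε * (1 - ε)) := by
  set p := Real.sqrt a2 with hpd
  set q := Real.sqrt a1 with hqd
  set r := Real.sqrt b2 with hrd
  set s := Real.sqrt b1 with hsd
  have hp2 : p ^ 2 = a2 := Real.sq_sqrt ha2
  have hq2 : q ^ 2 = a1 := Real.sq_sqrt ha1
  have hr2 : r ^ 2 = b2 := Real.sq_sqrt hb2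
  have hs2 : s ^ 2 = b1 := Real.sq_sqrt hb1
  have hp0 : 0 ≤ p := Real.sqrt_nonneg _
  have hq0 : 0 ≤ q := Real.sqrt_nonneg _
  have hr0 : 0 ≤ r := Real.sqrt_nonneg _
  have hs0 : 0 ≤ s := Real.sqrt_nonneg _
  have hps : 1 - ε ≤ p * s := by
    have h3 : Real.sqrt (1 - ε) ≤ p := by
      rw [hpd]; exact Real.sqrt_le_sqrt (by linarith)
    have h4 : Real.sqrt (1 - ε) ≤ s := by
      rw [hsd]; exact Real.sqrt_le_sqrt (by linarith)
    have h5 : Real.sqrt (1-ε) * Real.sqrt (1-ε) ≤ p * s :=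
      mul_le_mul h3 h4 (Real.sqrt_nonneg _) hp0
    rw [Real.mul_self_sqrt (by linarith)] at h5
    exact h5
  have hqr : q * r ≤ ε := by
    have h3 : q ≤ Real.sqrt ε := by rw [hqd]; exact Real.sqrt_le_sqrt h1
    have h4 : r ≤ Real.sqrt ε := by rw [hrd]; exact Real.sqrt_le_sqrt h2
    have h5 : q * r ≤ Real.sqrt ε * Real.sqrt ε := mul_le_mul h3 h4 hr0 (Real.sqrt_nonneg _)
    rw [Real.mul_self_sqrt hε0] at h5
    exact h5
  have key : (q * s + p * r) ^ 2 ≤ 4 * (ε * (1 - ε)) := by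
    have iden : (q*s + p*r)^2 + (p*s - q*r)^2 = (p^2+q^2)*(r^2+s^2) := by ring
    have hgap : 1 - 2*ε ≤ p*s - q*r := by linarith
    have hgap0 : 0 ≤ 1 - 2*ε := by linarith
    nlinarith [iden, hp2, hq2, hr2, hs2, hgap, hgap0, sq_nonneg (p*s - q*r)]
  have hnn : 0 ≤ q * s + p * r := by positivity
  calc q * s + p * r = Real.sqrt ((q*s+p*r)^2) := (Real.sqrt_sq hnn).symm
    _ ≤ Real.sqrt (4 * (ε * (1-ε))) := Real.sqrt_le_sqrt key
    _ = 2 * Real.sqrt (ε * (1-ε)) := by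
        rw [show (4:ℝ) * (ε*(1-ε)) = 2^2 * (ε*(1-ε)) by ring,
          Real.sqrt_mul (by positivity), Real.sqrt_sq (by norm_num)]

/-- Distinguishing bound: the real part of the overlap of two unit states that produce
different answers with error probability at most ε. -/
lemma ED.overlap {M : ℕ} (ans : Fin M → Bool) (ψ φ : EuclideanSpace ℂ (Fin M)) (ε : ℝ)
    (hε0 : 0 ≤ ε) (hε1 : ε ≤ 1/2)
    (hψ : ∑ b, ‖ψ b‖^2 = 1) (hφ : ∑ b, ‖φ b‖^2 = 1)
    (hψf : 1 - ε ≤ ∑ b ∈ Finset.univ.filter (fun b => ans b = false), ‖ψ b‖^2)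
    (hφt : 1 - ε ≤ ∑ b ∈ Finset.univ.filter (fun b => ans b = true), ‖φ b‖^2) :
    (inner ℂ ψ φ : ℂ).re ≤ 2 * Real.sqrt (ε * (1 - ε)) := by
  have h1 : (inner ℂ ψ φ : ℂ).re ≤ ∑ b, ‖ψ b‖ * ‖φ b‖ := by
    rw [PiLp.inner_apply]
    rw [Complex.re_sum]
    apply Finset.sum_le_sum
    intro b _
    calc (inner ℂ (ψ b) (φ b) : ℂ).re ≤ ‖(inner ℂ (ψ b) (φ b) : ℂ)‖ := Complex.re_le_norm _
      _ = ‖(inner ℂ (ψ b) (φ b) : ℂ)‖ := rfl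
      _ ≤ ‖ψ b‖ * ‖φ b‖ := norm_inner_le_norm _ _
  have hsplit : ∀ (f : Fin M → ℝ), (∑ b, f b) =
      (∑ b ∈ Finset.univ.filter (fun b => ans b = true), f b)
      + (∑ b ∈ Finset.univ.filter (fun b => ans b = false), f b) := by
    intro f
    rw [← Finset.sum_filter_add_sum_filter_not Finset.univ (fun b => ans b = true) f]
    congr 1
    apply Finset.sum_congr _ (fun _ _ => rfl)
    apply Finset.filter_congr
    intro b _
    simp
  set a1 : ℝ := ∑ b ∈ Finset.univ.filter (fun b => ans b = true), ‖ψ b‖^2 with ha1d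
  set a2 : ℝ := ∑ b ∈ Finset.univ.filter (fun b => ans b = false), ‖ψ b‖^2 with ha2d
  set b1 : ℝ := ∑ b ∈ Finset.univ.filter (fun b => ans b = true), ‖φ b‖^2 with hb1d
  set b2 : ℝ := ∑ b ∈ Finset.univ.filter (fun b => ans b = false), ‖φ b‖^2 with hb2d
  have hsa : a1 + a2 = 1 := by rw [ha1d, ha2d, ← hsplit]; exact hψ
  have hsb : b1 + b2 = 1 := by rw [hb1d, hb2d, ← hsplit]; exact hφ
  have hCS : ∀ (s : Finset (Fin M)),
      (∑ b ∈ s, ‖ψ b‖ * ‖φ b‖)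
        ≤ Real.sqrt (∑ b ∈ s, ‖ψ b‖^2) * Real.sqrt (∑ b ∈ s, ‖φ b‖^2) := by
    intro s
    have h2 := Finset.sum_mul_sq_le_sq_mul_sq s (fun b => ‖ψ b‖) (fun b => ‖φ b‖)
    have h3 : 0 ≤ ∑ b ∈ s, ‖ψ b‖ * ‖φ b‖ :=
      Finset.sum_nonneg fun b _ => by positivity
    calc ∑ b ∈ s, ‖ψ b‖ * ‖φ b‖ = Real.sqrt ((∑ b ∈ s, ‖ψ b‖ * ‖φ b‖)^2) :=
          (Real.sqrt_sq h3).symm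
      _ ≤ Real.sqrt ((∑ b ∈ s, ‖ψ b‖^2) * (∑ b ∈ s, ‖φ b‖^2)) := Real.sqrt_le_sqrt h2
      _ = _ := Real.sqrt_mul (Finset.sum_nonneg fun b _ => by positivity) _
  have hnn : ∀ (s : Finset (Fin M)) (f : Fin M → ℂ), (0:ℝ) ≤ ∑ b ∈ s, ‖f b‖^2 := by
    intro s f; exact Finset.sum_nonneg fun b _ => by positivity
  have h4 : (inner ℂ ψ φ : ℂ).re ≤ Real.sqrt a1 * Real.sqrt b1 + Real.sqrt a2 * Real.sqrt b2 := by
    calc (inner ℂ ψ φ : ℂ).re ≤ ∑ b, ‖ψ b‖ * ‖φ b‖ := h1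
      _ = (∑ b ∈ Finset.univ.filter (fun b => ans b = true), ‖ψ b‖ * ‖φ b‖)
          + (∑ b ∈ Finset.univ.filter (fun b => ans b = false), ‖ψ b‖ * ‖φ b‖) := hsplit _
      _ ≤ Real.sqrt a1 * Real.sqrt b1 + Real.sqrt a2 * Real.sqrt b2 := by
          exact add_le_add (hCS _) (hCS _)
  have ha1ε : a1 ≤ ε := by
    have := hnn (Finset.univ.filter (fun b => ans b = false)) (fun b => ψ b)
    simp only [ha1d, ha2d] at *
    linarith [hψf]
  have hb2ε : b2 ≤ ε := by
    have := hnn (Finset.univ.filter (fun b => ans b = true)) (fun b => φ b)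
    linarith [hφt]
  have := ED.two_dist hε0 hε1 (hnn _ (fun b => ψ b)) (hnn _ (fun b => ψ b)) (hnn _ (fun b => φ b)) (hnn _ (fun b => φ b)) hsa hsb ha1ε hb2ε
  linarith

end EDPartB




open Finset Real

noncomputable section EDPartC
open scoped Classical

namespace ED

variable {N : ℕ}

/-- `y` input: the strictly increasing relabeling of the permutation σ (rank `σ i`). -/
def yfun (σ : Equiv.Perm (Fin N)) : Fin N → ℕ := fun i => 2 * (σ i : ℕ)

/-- `x` input: σ with the element `p` (of rank `r = σ p`) moved down to collide with the
element of rank `r - d`. -/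
def xfun (σ : Equiv.Perm (Fin N)) (p : Fin N) (d : ℕ) : Fin N → ℕ :=
  fun i => if i = p then 2 * ((σ p : ℕ) - d) else 2 * (σ i : ℕ)

/-- Canonical representative of the comparison class (weak order) of `xfun σ p d`. -/
def repf (σ : Equiv.Perm (Fin N)) (p : Fin N) (d : ℕ) : Fin N → ℕ :=
  fun i => if i = p then 2 * ((σ p : ℕ) - d)
    else if (σ i : ℕ) < (σ p : ℕ) then 2 * (σ i : ℕ) else 2 * ((σ i : ℕ) - 1)

/-- Index set of the adversary pairs. -/
def Tset (N : ℕ) : Finset (Equiv.Perm (Fin N) × Fin N × ℕ) :=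
  (Finset.univ ×ˢ Finset.univ ×ˢ Finset.range N).filter
    (fun t => 1 ≤ t.2.2 ∧ t.2.2 ≤ (t.1 t.2.1 : ℕ))

lemma mem_Tset {t : Equiv.Perm (Fin N) × Fin N × ℕ} :
    t ∈ Tset N ↔ 1 ≤ t.2.2 ∧ t.2.2 ≤ (t.1 t.2.1 : ℕ) := by
  unfold Tset
  simp only [Finset.mem_filter, Finset.mem_product, Finset.mem_univ, true_and,
    Finset.mem_range]
  constructor
  · tauto
  · intro h
    exact ⟨lt_of_le_of_lt h.2 (t.1 t.2.1).isLt, h⟩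

/-- Disagreement of the comparison oracles of `xfun σ p d` and `yfun σ` on the pair `c`. -/
def Dis (σ : Equiv.Perm (Fin N)) (p : Fin N) (d : ℕ) (c : Fin N × Fin N) : Prop :=
  ¬ ((xfun σ p d c.1 < xfun σ p d c.2) ↔ (yfun σ c.1 < yfun σ c.2))

lemma val_ne (σ : Equiv.Perm (Fin N)) {i p : Fin N} (h : i ≠ p) : (σ i : ℕ) ≠ (σ p : ℕ) :=
  fun he => h (σ.injective (Fin.val_injective he))

lemma dis_iff (σ : Equiv.Perm (Fin N)) (p : Fin N) (d : ℕ)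
    (hd : 1 ≤ d) (hr : d ≤ (σ p : ℕ)) (i j : Fin N) :
    Dis σ p d (i, j) ↔
      (j = p ∧ i ≠ p ∧ (σ p : ℕ) - d ≤ (σ i : ℕ) ∧ (σ i : ℕ) < (σ p : ℕ)) ∨
      (i = p ∧ j ≠ p ∧ (σ p : ℕ) - d < (σ j : ℕ) ∧ (σ j : ℕ) < (σ p : ℕ)) := by
  unfold Dis xfun yfun
  by_cases hi : i = p <;> by_cases hj : j = p
  · subst hi; subst hj; simp
  · subst hi
    have h1 := val_ne σ hj
    simp [hj]
    omega
  · subst hj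
    have h1 := val_ne σ hi
    simp [hi]
    omega
  · have h1 := val_ne σ hi
    have h2 := val_ne σ hj
    simp [hi, hj]

/-- The non-`p` element of a disagreeing comparison. -/
def oth (p : Fin N) (c : Fin N × Fin N) : Fin N := if c.2 = p then c.1 else c.2

def kOf (σ : Equiv.Perm (Fin N)) (p : Fin N) (c : Fin N × Fin N) : ℕ :=
  (σ p : ℕ) - (σ (oth p c) : ℕ)

def aOf (σ : Equiv.Perm (Fin N)) (p : Fin N) (d : ℕ) (c : Fin N × Fin N) : ℕ :=
  (σ (oth p c) : ℕ) - ((σ p : ℕ) - d)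

lemma dis_facts (σ : Equiv.Perm (Fin N)) (p : Fin N) (d : ℕ)
    (hd : 1 ≤ d) (hr : d ≤ (σ p : ℕ)) {c : Fin N × Fin N} (hdis : Dis σ p d c) :
    1 ≤ kOf σ p c ∧ aOf σ p d c + kOf σ p c = d ∧
      ((σ p : ℕ) - d) ≤ (σ (oth p c) : ℕ) ∧ (σ (oth p c) : ℕ) < (σ p : ℕ) := by
  obtain ⟨i, j⟩ := c
  rw [dis_iff σ p d hd hr i j] at hdis
  unfold kOf aOf oth
  rcases hdis with ⟨hj, hi, h1, h2⟩ | ⟨hi, hj, h1, h2⟩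
  · subst hj
    simp
    omega
  · simp [hj]
    omega

/-! ### Canonicalization of x-classes -/

def predF (a : Fin N) : Fin N := ⟨(a:ℕ) - 1, lt_of_le_of_lt (Nat.sub_le _ _) a.isLt⟩

@[simp] lemma predF_val (a : Fin N) : ((predF a : Fin N) : ℕ) = (a:ℕ) - 1 := rfl

def swapDown (σ : Equiv.Perm (Fin N)) (p : Fin N) : Equiv.Perm (Fin N) :=
  (Equiv.swap (σ p) (predF (σ p))) * σ

lemma swapDown_apply (σ : Equiv.Perm (Fin N)) (p u : Fin N) :
    swapDown σ p u =
      if σ u = σ p then predF (σ p) else if σ u = predF (σ p) then σ p else σ u := by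
  simp [swapDown, Equiv.Perm.mul_apply, Equiv.swap_apply_def]

lemma swapDown_val (σ : Equiv.Perm (Fin N)) (p : Fin N) (u : Fin N) :
    ((swapDown σ p u : Fin N) : ℕ) =
      if u = p then (σ p : ℕ) - 1
      else if (σ u : ℕ) = (σ p : ℕ) - 1 then (σ p : ℕ) else (σ u : ℕ) := by
  rw [swapDown_apply]
  by_cases h1 : u = p
  · subst h1; rw [if_pos rfl, if_pos rfl, predF_val]
  · have h2 : σ u ≠ σ p := fun h => h1 (σ.injective h)
    rw [if_neg h2, if_neg h1]
    by_cases h3 : σ u = predF (σ p)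
    · rw [if_pos h3, if_pos (by rw [h3, predF_val])]
    · rw [if_neg h3, if_neg (fun hv => h3 (Fin.val_injective (by rw [hv, predF_val])))]

lemma swapDown_p_val (σ : Equiv.Perm (Fin N)) (p : Fin N) :
    ((swapDown σ p p : Fin N) : ℕ) = (σ p : ℕ) - 1 := by
  rw [swapDown_val, if_pos rfl]

lemma repf_swapDown (σ : Equiv.Perm (Fin N)) (p : Fin N) (d : ℕ)
    (hd2 : 2 ≤ d) (hdr : d ≤ (σ p : ℕ)) :
    repf σ p d = repf (swapDown σ p) p (d - 1) := by
  funext u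
  have hvp := swapDown_p_val σ p
  unfold repf
  by_cases hu : u = p
  · subst hu; rw [if_pos rfl, if_pos rfl, hvp]
    congr 1; omega
  · have hvu := swapDown_val σ p u
    rw [if_neg hu] at hvu
    have h3 : (σ u : ℕ) ≠ (σ p : ℕ) := val_ne σ hu
    rw [if_neg hu, if_neg hu, hvu, hvp]
    by_cases hq : (σ u : ℕ) = (σ p : ℕ) - 1
    · rw [if_pos hq]
      split_ifs <;> omega
    · rw [if_neg hq]
      split_ifs <;> omega

lemma repf_mirror (σ : Equiv.Perm (Fin N)) (p : Fin N) (hr1 : 1 ≤ (σ p : ℕ)) :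
    repf σ p 1 = repf (swapDown σ p) (σ.symm (predF (σ p))) 1 := by
  set q := σ.symm (predF (σ p)) with hqd
  have hσq : σ q = predF (σ p) := Equiv.apply_symm_apply σ _
  have hσqv : (σ q : ℕ) = (σ p : ℕ) - 1 := by rw [hσq, predF_val]
  have hqp : q ≠ p := fun h => by rw [h] at hσqv; omega
  have hvq : ((swapDown σ p q : Fin N) : ℕ) = (σ p : ℕ) := by
    rw [swapDown_val, if_neg hqp, if_pos hσqv]
  funext u
  unfold repf
  by_cases hu1 : u = p
  · have hup : u ≠ q := fun h => hqp ((h.symm.trans hu1))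
    rw [if_pos hu1, if_neg hup, hu1, swapDown_p_val, hvq, if_pos (by omega)]
  · by_cases hu2 : u = q
    · rw [if_neg hu1, if_pos hu2, hu2, hvq, if_pos (by omega), hσqv]
    · have h3 : (σ u : ℕ) ≠ (σ p : ℕ) := val_ne σ hu1
      have h4 : (σ u : ℕ) ≠ (σ q : ℕ) := val_ne σ hu2
      have hvu : ((swapDown σ p u : Fin N) : ℕ) = (σ u : ℕ) := by
        rw [swapDown_val, if_neg hu1, if_neg (by omega)]
      rw [if_neg hu1, if_neg hu2, hvu, hvq]

def canonAux (p : Fin N) : ℕ → Equiv.Perm (Fin N) → Equiv.Perm (Fin N)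
  | 0, σ => σ
  | n+1, σ => canonAux p n (swapDown σ p)

def ASet (N : ℕ) : Finset (Equiv.Perm (Fin N) × Fin N) :=
  Finset.univ.filter
    (fun σp => 1 ≤ (σp.1 σp.2 : ℕ) ∧ σp.1.symm (predF (σp.1 σp.2)) < σp.2)

def BSet (N : ℕ) : Finset (Equiv.Perm (Fin N) × Fin N) :=
  Finset.univ.filter
    (fun σp => 1 ≤ (σp.1 σp.2 : ℕ) ∧ σp.2 < σp.1.symm (predF (σp.1 σp.2)))

def Labels (N : ℕ) : Finset (Fin N → ℕ) :=
  (ASet N).image (fun σp => repf σp.1 σp.2 1)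

lemma repf_one_mem (σ : Equiv.Perm (Fin N)) (p : Fin N) (hr1 : 1 ≤ (σ p : ℕ)) :
    repf σ p 1 ∈ Labels N := by
  set q := σ.symm (predF (σ p)) with hqd
  have hσq : σ q = predF (σ p) := Equiv.apply_symm_apply σ _
  have hσqv : (σ q : ℕ) = (σ p : ℕ) - 1 := by rw [hσq, predF_val]
  have hqp : q ≠ p := fun h => by rw [h] at hσqv; omega
  rcases lt_or_gt_of_ne hqp with hlt | hgt
  · exact Finset.mem_image.2 ⟨(σ, p), Finset.mem_filter.2 ⟨Finset.mem_univ _, hr1, hlt⟩, rfl⟩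
  · have hvq : ((swapDown σ p q : Fin N) : ℕ) = (σ p : ℕ) := by
      rw [swapDown_val, if_neg hqp, if_pos hσqv]
    have hswq : swapDown σ p q = σ p := by
      rw [swapDown_apply, if_neg (fun h => hqp (σ.injective h)), if_pos hσq]
    have hswp : swapDown σ p p = predF (σ p) := by
      rw [swapDown_apply, if_pos rfl]
    have hmem : (swapDown σ p, q) ∈ ASet N := by
      refine Finset.mem_filter.2 ⟨Finset.mem_univ _, ?_, ?_⟩
      · rw [hvq]; exact hr1
      · have : (swapDown σ p).symm (predF (swapDown σ p q)) = p := by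
          rw [Equiv.symm_apply_eq, hswp, hswq]
        rw [this]; exact hgt
    exact Finset.mem_image.2 ⟨(swapDown σ p, q), hmem, (repf_mirror σ p hr1).symm⟩

lemma repf_mem_Labels : ∀ (d : ℕ) (σ : Equiv.Perm (Fin N)) (p : Fin N),
    1 ≤ d → d ≤ (σ p : ℕ) → repf σ p d ∈ Labels N := by
  intro d
  induction d with
  | zero => intro σ p h; omega
  | succ n ih =>
    intro σ p hd hdr
    rcases Nat.eq_zero_or_pos n with rfl | hn
    · exact repf_one_mem σ p hdr
    · have h2 : (2:ℕ) ≤ n + 1 := by omega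
      have hres := repf_swapDown σ p (n+1) h2 hdr
      rw [Nat.add_sub_cancel] at hres
      rw [hres]
      refine ih _ p hn ?_
      rw [swapDown_p_val]; omega

/-! ### Counting the labels -/

lemma card_ASet_le (hN : 1 ≤ N) :
    2 * (ASet N).card ≤ (N - 1) * Fintype.card (Equiv.Perm (Fin N)) := by
  classical
  -- injection from ASet to BSet
  have hAB : (ASet N).card ≤ (BSet N).card := by
    apply Finset.card_le_card_of_injOn
      (fun σp => (swapDown σp.1 σp.2, σp.1.symm (predF (σp.1 σp.2))))
    · intro σp hmem
      obtain ⟨σ, p⟩ := σp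
      simp only [ASet, Finset.mem_coe, Finset.mem_filter, Finset.mem_univ, true_and] at hmem
      obtain ⟨hr1, hlt⟩ := hmem
      set q := σ.symm (predF (σ p)) with hqd
      have hσq : σ q = predF (σ p) := Equiv.apply_symm_apply σ _
      have hσqv : (σ q : ℕ) = (σ p : ℕ) - 1 := by rw [hσq, predF_val]
      have hqp : q ≠ p := fun h => by rw [h] at hσqv; omega
      have hswq : swapDown σ p q = σ p := by
        rw [swapDown_apply, if_neg (fun h => hqp (σ.injective h)), if_pos hσq]
      have hswp : swapDown σ p p = predF (σ p) := by
        rw [swapDown_apply, if_pos rfl]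
      simp only [BSet, Finset.mem_coe, Finset.mem_filter, Finset.mem_univ, true_and]
      constructor
      · rw [hswq]; exact hr1
      · have hpart : (swapDown σ p).symm (predF (swapDown σ p q)) = p := by
          rw [Equiv.symm_apply_eq, hswp, hswq]
        rw [hpart]; exact hlt
    · intro σp1 h1 σp2 h2 heq
      obtain ⟨σ1, p1⟩ := σp1
      obtain ⟨σ2, p2⟩ := σp2
      simp only [ASet, Finset.coe_filter, Set.mem_setOf_eq, Finset.mem_univ, true_and] at h1 h2
      simp only [Prod.mk.injEq] at heq
      obtain ⟨hτ, hq⟩ := heq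
      have hv1 : swapDown σ1 p1 (σ1.symm (predF (σ1 p1))) = σ1 p1 := by
        have hσq : σ1 (σ1.symm (predF (σ1 p1))) = predF (σ1 p1) := Equiv.apply_symm_apply _ _
        have hqp : σ1.symm (predF (σ1 p1)) ≠ p1 := fun h => by
          have := congrArg (fun z => (σ1 z : ℕ)) h
          simp only [hσq, predF_val] at this
          omega
        rw [swapDown_apply, if_neg (fun h => hqp (σ1.injective h)), if_pos hσq]
      have hv2 : swapDown σ2 p2 (σ2.symm (predF (σ2 p2))) = σ2 p2 := by
        have hσq : σ2 (σ2.symm (predF (σ2 p2))) = predF (σ2 p2) := Equiv.apply_symm_apply _ _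
        have hqp : σ2.symm (predF (σ2 p2)) ≠ p2 := fun h => by
          have := congrArg (fun z => (σ2 z : ℕ)) h
          simp only [hσq, predF_val] at this
          omega
        rw [swapDown_apply, if_neg (fun h => hqp (σ2.injective h)), if_pos hσq]
      -- the top values agree
      have hval : σ1 p1 = σ2 p2 := by
        rw [← hv1, ← hv2, hτ, hq]
      -- recover σ
      have hσ : σ1 = σ2 := by
        have e1 : swapDown σ1 p1 = swapDown σ2 p2 := hτ
        unfold swapDown at e1
        have := congrArg (fun τ => (Equiv.swap (σ1 p1) (predF (σ1 p1)))⁻¹ * τ) e1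
        rw [← mul_assoc, ← mul_assoc] at this
        rw [hval] at this
        simp [Equiv.swap_inv] at this
        exact this
      refine Prod.ext ?_ ?_
      · exact hσ
      · simp only
        have : σ1 p1 = σ1 p2 := by rw [hval, hσ]
        exact σ1.injective this
  have hdisj : Disjoint (ASet N) (BSet N) := by
    rw [Finset.disjoint_left]
    intro σp hA hB
    simp only [ASet, Finset.mem_filter] at hA
    simp only [BSet, Finset.mem_filter] at hB
    exact absurd hB.2.2 (not_lt.2 (le_of_lt hA.2.2))
  have hunion : (ASet N).card + (BSet N).card ≤ (N - 1) * Fintype.card (Equiv.Perm (Fin N)) := by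
    rw [← Finset.card_union_of_disjoint hdisj]
    have hmaps : ∀ σp ∈ ASet N ∪ BSet N,
        (σp.1, σp.1 σp.2) ∈
          (Finset.univ : Finset (Equiv.Perm (Fin N))) ×ˢ
            (Finset.univ.erase (⟨0, by omega⟩ : Fin N)) := by
      intro σp hmem
      rcases Finset.mem_union.1 hmem with h | h
      · simp only [ASet, Finset.mem_filter] at h
        refine Finset.mem_product.2 ⟨Finset.mem_univ _, Finset.mem_erase.2 ⟨?_, Finset.mem_univ _⟩⟩
        intro hz
        have := congrArg (fun z : Fin N => (z : ℕ)) hz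
        simp only at this
        omega
      · simp only [BSet, Finset.mem_filter] at h
        refine Finset.mem_product.2 ⟨Finset.mem_univ _, Finset.mem_erase.2 ⟨?_, Finset.mem_univ _⟩⟩
        intro hz
        have := congrArg (fun z : Fin N => (z : ℕ)) hz
        simp only at this
        omega
    calc (ASet N ∪ BSet N).card
        ≤ ((Finset.univ : Finset (Equiv.Perm (Fin N))) ×ˢ
            (Finset.univ.erase (⟨0, by omega⟩ : Fin N))).card := by
          apply Finset.card_le_card_of_injOn (fun σp => (σp.1, σp.1 σp.2)) (fun σp h => hmaps σp h)
          intro σp1 _ σp2 _ heq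
          simp only [Prod.mk.injEq] at heq
          obtain ⟨h1, h2⟩ := heq
          refine Prod.ext h1 ?_
          rw [← h1] at h2
          exact σp1.1.injective h2
      _ = (N - 1) * Fintype.card (Equiv.Perm (Fin N)) := by
          rw [Finset.card_product, Finset.card_erase_of_mem (Finset.mem_univ _)]
          simp [Finset.card_univ, mul_comm]
  omega

lemma card_Labels_le (hN : 1 ≤ N) :
    2 * (Labels N).card ≤ (N - 1) * Fintype.card (Equiv.Perm (Fin N)) := by
  have := Finset.card_image_le (s := ASet N) (f := fun σp => repf σp.1 σp.2 1)
  have h2 := card_ASet_le (N := N) hN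
  unfold Labels
  omega

/-! ### The key fiber lemmas -/

lemma repf_apply (σ : Equiv.Perm (Fin N)) (p : Fin N) (d : ℕ) (u : Fin N) :
    repf σ p d u = if u = p then 2 * ((σ p : ℕ) - d)
      else if (σ u : ℕ) < (σ p : ℕ) then 2 * (σ u : ℕ) else 2 * ((σ u : ℕ) - 1) := rfl

lemma keyX {σ σ' : Equiv.Perm (Fin N)} {p p' : Fin N} {d d' : ℕ} {i j : Fin N}
    (h1 : 1 ≤ d) (h2 : d ≤ (σ p : ℕ)) (h1' : 1 ≤ d') (h2' : d' ≤ (σ' p' : ℕ))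
    (hdis : Dis σ p d (i, j)) (hdis' : Dis σ' p' d' (i, j))
    (hrep : repf σ p d = repf σ' p' d') :
    p = p' ∧ aOf σ p d (i, j) = aOf σ' p' d' (i, j) ∧
      (kOf σ p (i, j) = kOf σ' p' (i, j) → σ = σ' ∧ d = d') := by
  have H : ∀ u, repf σ p d u = repf σ' p' d' u := fun u => congrFun hrep u
  rw [dis_iff σ p d h1 h2 i j] at hdis
  rw [dis_iff σ' p' d' h1' h2' i j] at hdis'
  rcases hdis with ⟨hj, hi, hb1, hb2⟩ | ⟨hi, hj, hb1, hb2⟩ <;>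
    rcases hdis' with ⟨hj', hi', hb1', hb2'⟩ | ⟨hi', hj', hb1', hb2'⟩
  · -- both case T1 : p = j = p'
    have hpp : p = p' := hj ▸ hj'
    subst hpp
    have hpj : p = j := hj.symm
    -- value at i : 2 σ i = 2 σ' i
    have Hi := H i
    rw [repf_apply, repf_apply, if_neg hi, if_neg hi', if_pos hb2, if_pos hb2'] at Hi
    -- value at p : ties
    have Hp := H p
    rw [repf_apply, repf_apply, if_pos rfl, if_pos rfl] at Hp
    have hoth : oth p (i, j) = i := by unfold oth; rw [if_pos hj]
    refine ⟨rfl, ?_, ?_⟩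
    · unfold aOf; rw [hoth]; omega
    · intro hk
      unfold kOf at hk; rw [hoth] at hk
      have hr : (σ p : ℕ) = (σ' p : ℕ) := by omega
      have hdd : d = d' := by omega
      refine ⟨?_, hdd⟩
      apply Equiv.ext
      intro u
      by_cases hu : u = p
      · subst hu; exact Fin.val_injective (by omega)
      · have Hu := H u
        rw [repf_apply, repf_apply, if_neg hu, if_neg hu] at Hu
        have hne1 : (σ u : ℕ) ≠ (σ p : ℕ) := val_ne σ hu
        have hne2 : (σ' u : ℕ) ≠ (σ' p : ℕ) := val_ne σ' hu
        apply Fin.val_injective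
        rw [← hr] at Hu hne2
        split_ifs at Hu <;> omega
  · -- T1 / T2' : contradiction
    exfalso
    have hpj : j = p := hj
    have hip : i = p' := hi'
    have hne : p ≠ p' := by
      intro h
      rw [← h] at hip
      exact hi hip
    have Hj := H j
    rw [repf_apply, repf_apply, if_pos hpj, if_neg (by rw [hpj]; exact fun hc => hne hc)] at Hj
    have hjlt : (σ' j : ℕ) < (σ' p' : ℕ) := by rw [hpj]; rw [hpj] at hb2'; exact hb2'
    rw [if_pos hjlt] at Hj
    have Hi := H i
    rw [repf_apply, repf_apply, if_neg hi, if_pos hip, if_pos hb2] at Hi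
    omega
  · -- T2 / T1' : contradiction
    exfalso
    have hpj : j = p' := hj'
    have hip : i = p := hi
    have hne : p ≠ p' := by
      intro h
      rw [h] at hip
      exact hi' hip
    have Hj := H j
    rw [repf_apply, repf_apply, if_neg (by rw [hpj]; exact fun hc => hne hc.symm), if_pos hpj] at Hj
    have hjlt : (σ j : ℕ) < (σ p : ℕ) := by rw [hpj]; rw [hpj] at hb2; exact hb2
    rw [if_pos hjlt] at Hj
    have Hi := H i
    rw [repf_apply, repf_apply, if_pos hip, if_neg hi', if_pos hb2'] at Hi
    omega
  · -- both case T2 : p = i = p'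
    have hpp : p = p' := by rw [← hi, hi']
    subst hpp
    have Hj := H j
    rw [repf_apply, repf_apply, if_neg hj, if_neg hj', if_pos hb2, if_pos hb2'] at Hj
    have Hp := H p
    rw [repf_apply, repf_apply, if_pos rfl, if_pos rfl] at Hp
    have hoth : oth p (i, j) = j := by unfold oth; rw [if_neg hj]
    refine ⟨rfl, ?_, ?_⟩
    · unfold aOf; rw [hoth]; omega
    · intro hk
      unfold kOf at hk; rw [hoth] at hk
      have hr : (σ p : ℕ) = (σ' p : ℕ) := by omega
      have hdd : d = d' := by omega
      refine ⟨?_, hdd⟩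
      apply Equiv.ext
      intro u
      by_cases hu : u = p
      · subst hu; exact Fin.val_injective (by omega)
      · have Hu := H u
        rw [repf_apply, repf_apply, if_neg hu, if_neg hu] at Hu
        have hne1 : (σ u : ℕ) ≠ (σ p : ℕ) := val_ne σ hu
        have hne2 : (σ' u : ℕ) ≠ (σ' p : ℕ) := val_ne σ' hu
        apply Fin.val_injective
        rw [← hr] at Hu hne2
        split_ifs at Hu <;> omega

lemma keyY {σ : Equiv.Perm (Fin N)} {p p' : Fin N} {d d' : ℕ} {i j : Fin N}
    (h1 : 1 ≤ d) (h2 : d ≤ (σ p : ℕ)) (h1' : 1 ≤ d') (h2' : d' ≤ (σ p' : ℕ))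
    (hdis : Dis σ p d (i, j)) (hdis' : Dis σ p' d' (i, j)) :
    p = p' ∧ kOf σ p (i, j) = kOf σ p' (i, j) ∧
      (aOf σ p d (i, j) = aOf σ p' d' (i, j) → d = d') := by
  rw [dis_iff σ p d h1 h2 i j] at hdis
  rw [dis_iff σ p' d' h1' h2' i j] at hdis'
  rcases hdis with ⟨hj, hi, hb1, hb2⟩ | ⟨hi, hj, hb1, hb2⟩ <;>
    rcases hdis' with ⟨hj', hi', hb1', hb2'⟩ | ⟨hi', hj', hb1', hb2'⟩
  · have hpp : p = p' := hj ▸ hj'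
    subst hpp
    have hoth : oth p (i, j) = i := by unfold oth; rw [if_pos hj]
    refine ⟨rfl, rfl, ?_⟩
    unfold aOf; rw [hoth]; omega
  · exfalso
    have e1 : (σ j : ℕ) = (σ p : ℕ) := by rw [hj]
    have e2 : (σ i : ℕ) = (σ p' : ℕ) := by rw [hi']
    omega
  · exfalso
    have e1 : (σ j : ℕ) = (σ p' : ℕ) := by rw [hj']
    have e2 : (σ i : ℕ) = (σ p : ℕ) := by rw [hi]
    omega
  · have hpp : p = p' := by rw [← hi, hi']
    subst hpp
    have hoth : oth p (i, j) = j := by unfold oth; rw [if_neg hj]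
    refine ⟨rfl, rfl, ?_⟩
    unfold aOf; rw [hoth]; omega

/-- The x-side fiber row-sum bound. -/
lemma fiberX_sum_le (i j : Fin N) (f : Fin N → ℕ) :
    ∑ t ∈ (Tset N).filter
        (fun t => Dis t.1 t.2.1 t.2.2 (i, j) ∧ repf t.1 t.2.1 t.2.2 = f),
      hterm (aOf t.1 t.2.1 t.2.2 (i, j)) (kOf t.1 t.2.1 (i, j) - 1) ≤ Real.pi + 1 := by
  set F := (Tset N).filter
      (fun t => Dis t.1 t.2.1 t.2.2 (i, j) ∧ repf t.1 t.2.1 t.2.2 = f) with hFd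
  have hF : ∀ t ∈ F, (1 ≤ t.2.2 ∧ t.2.2 ≤ (t.1 t.2.1 : ℕ)) ∧
      Dis t.1 t.2.1 t.2.2 (i, j) ∧ repf t.1 t.2.1 t.2.2 = f := by
    intro t ht
    rw [hFd, Finset.mem_filter] at ht
    exact ⟨mem_Tset.1 ht.1, ht.2⟩
  rcases Finset.eq_empty_or_nonempty F with he | ⟨t₀, ht₀⟩
  · rw [he, Finset.sum_empty]; linarith [Real.pi_pos]
  · obtain ⟨⟨h0a, h0b⟩, h0dis, h0rep⟩ := hF t₀ ht₀
    set m := aOf t₀.1 t₀.2.1 t₀.2.2 (i, j) with hmd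
    have hkey : ∀ t ∈ F, aOf t.1 t.2.1 t.2.2 (i, j) = m ∧
        (kOf t.1 t.2.1 (i, j) = kOf t₀.1 t₀.2.1 (i, j) → t = t₀) := by
      intro t ht
      obtain ⟨⟨ha, hb⟩, hdis, hrep⟩ := hF t ht
      have := keyX ha hb h0a h0b hdis h0dis (hrep.trans h0rep.symm)
      refine ⟨this.2.1, fun hk => ?_⟩
      obtain ⟨hσ, hd⟩ := this.2.2 hk
      obtain ⟨σ1, p1, d1⟩ := t
      obtain ⟨σ0, p0, d0⟩ := t₀
      simp only at this hσ hd
      rw [Prod.mk.injEq, Prod.mk.injEq]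
      exact ⟨hσ, this.1, hd⟩
    have hinj : ∀ t1 ∈ F, ∀ t2 ∈ F,
        kOf t1.1 t1.2.1 (i, j) - 1 = kOf t2.1 t2.2.1 (i, j) - 1 → t1 = t2 := by
      intro t1 h1 t2 h2 hk
      obtain ⟨⟨ha1, hb1⟩, hdis1, hrep1⟩ := hF t1 h1
      obtain ⟨⟨ha2, hb2⟩, hdis2, hrep2⟩ := hF t2 h2
      have hk1 := (dis_facts t1.1 t1.2.1 t1.2.2 ha1 hb1 hdis1).1
      have hk2 := (dis_facts t2.1 t2.2.1 t2.2.2 ha2 hb2 hdis2).1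
      have hkk : kOf t1.1 t1.2.1 (i, j) = kOf t2.1 t2.2.1 (i, j) := by omega
      have key := keyX ha1 hb1 ha2 hb2 hdis1 hdis2 (hrep1.trans hrep2.symm)
      obtain ⟨hσ, hd⟩ := key.2.2 hkk
      obtain ⟨σ1, p1, d1⟩ := t1
      obtain ⟨σ2, p2, d2⟩ := t2
      simp only at key hσ hd
      rw [Prod.mk.injEq, Prod.mk.injEq]
      exact ⟨hσ, key.1, hd⟩
    calc ∑ t ∈ F, hterm (aOf t.1 t.2.1 t.2.2 (i, j)) (kOf t.1 t.2.1 (i, j) - 1)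
        = ∑ t ∈ F, hterm m (kOf t.1 t.2.1 (i, j) - 1) := by
          apply Finset.sum_congr rfl
          intro t ht
          rw [(hkey t ht).1]
      _ = ∑ n ∈ F.image (fun t => kOf t.1 t.2.1 (i, j) - 1), hterm m n := by
          rw [Finset.sum_image hinj]
      _ ≤ ∑ n ∈ Finset.range N, hterm m n := by
          apply Finset.sum_le_sum_of_subset_of_nonneg
          · intro n hn
            rw [Finset.mem_image] at hn
            obtain ⟨t, ht, rfl⟩ := hn
            obtain ⟨⟨ha, hb⟩, hdis, hrep⟩ := hF t ht
            rw [Finset.mem_range]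
            have : kOf t.1 t.2.1 (i, j) ≤ (t.1 t.2.1 : ℕ) := Nat.sub_le _ _
            have hlt := (t.1 t.2.1).isLt
            omega
          · intro n _ _
            exact hterm_nonneg m n
      _ ≤ Real.pi + 1 := hilbertRow m N

/-- The y-side fiber column-sum bound. -/
lemma fiberY_sum_le (i j : Fin N) (σ₀ : Equiv.Perm (Fin N)) :
    ∑ t ∈ (Tset N).filter
        (fun t => Dis t.1 t.2.1 t.2.2 (i, j) ∧ t.1 = σ₀),
      hterm (kOf t.1 t.2.1 (i, j) - 1) (aOf t.1 t.2.1 t.2.2 (i, j)) ≤ Real.pi + 1 := by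
  set F := (Tset N).filter
      (fun t => Dis t.1 t.2.1 t.2.2 (i, j) ∧ t.1 = σ₀) with hFd
  have hF : ∀ t ∈ F, (1 ≤ t.2.2 ∧ t.2.2 ≤ (t.1 t.2.1 : ℕ)) ∧
      Dis t.1 t.2.1 t.2.2 (i, j) ∧ t.1 = σ₀ := by
    intro t ht
    rw [hFd, Finset.mem_filter] at ht
    exact ⟨mem_Tset.1 ht.1, ht.2⟩
  rcases Finset.eq_empty_or_nonempty F with he | ⟨t₀, ht₀⟩
  · rw [he, Finset.sum_empty]; linarith [Real.pi_pos]
  · obtain ⟨⟨h0a, h0b⟩, h0dis, h0σ⟩ := hF t₀ ht₀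
    set m := kOf t₀.1 t₀.2.1 (i, j) - 1 with hmd
    have hkey : ∀ t ∈ F, kOf t.1 t.2.1 (i, j) - 1 = m ∧
        (aOf t.1 t.2.1 t.2.2 (i, j) = aOf t₀.1 t₀.2.1 t₀.2.2 (i, j) → t = t₀) := by
      intro t ht
      obtain ⟨⟨ha, hb⟩, hdis, hσ⟩ := hF t ht
      have hb' : t.2.2 ≤ (σ₀ t.2.1 : ℕ) := by rw [← hσ]; exact hb
      have h0b' : t₀.2.2 ≤ (σ₀ t₀.2.1 : ℕ) := by rw [← h0σ]; exact h0b
      have hdis2 : Dis σ₀ t.2.1 t.2.2 (i, j) := by rw [← hσ]; exact hdis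
      have h0dis2 : Dis σ₀ t₀.2.1 t₀.2.2 (i, j) := by rw [← h0σ]; exact h0dis
      have key := keyY ha hb' h0a h0b' hdis2 h0dis2
      constructor
      · rw [hmd, hσ, h0σ, key.2.1]
      · intro hA
        have hA2 : aOf σ₀ t.2.1 t.2.2 (i, j) = aOf σ₀ t₀.2.1 t₀.2.2 (i, j) := by
          rw [hσ, h0σ] at hA
          exact hA
        have hd := key.2.2 hA2
        obtain ⟨σ1, p1, d1⟩ := t
        obtain ⟨σ0', p0, d0⟩ := t₀
        simp only at key hd hσ h0σ
        rw [Prod.mk.injEq, Prod.mk.injEq]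
        exact ⟨hσ.trans h0σ.symm, key.1, hd⟩
    have hinj : ∀ t1 ∈ F, ∀ t2 ∈ F,
        aOf t1.1 t1.2.1 t1.2.2 (i, j) = aOf t2.1 t2.2.1 t2.2.2 (i, j) → t1 = t2 := by
      intro t1 h1 t2 h2 hA
      have e1 := (hkey t1 h1).2
      have e2 := (hkey t2 h2).2
      have e3 := (hkey t2 h2).1
      -- t1 = t₀ and t2 = t₀ provided a-values match t₀; use transitivity through t₀
      obtain ⟨⟨ha1, hb1⟩, hdis1, hσ1⟩ := hF t1 h1
      obtain ⟨⟨ha2, hb2⟩, hdis2, hσ2⟩ := hF t2 h2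
      have hb1' : t1.2.2 ≤ (σ₀ t1.2.1 : ℕ) := by rw [← hσ1]; exact hb1
      have hb2' : t2.2.2 ≤ (σ₀ t2.2.1 : ℕ) := by rw [← hσ2]; exact hb2
      have hdisA : Dis σ₀ t1.2.1 t1.2.2 (i, j) := by rw [← hσ1]; exact hdis1
      have hdisB : Dis σ₀ t2.2.1 t2.2.2 (i, j) := by rw [← hσ2]; exact hdis2
      have key := keyY ha1 hb1' ha2 hb2' hdisA hdisB
      have hA2 : aOf σ₀ t1.2.1 t1.2.2 (i, j) = aOf σ₀ t2.2.1 t2.2.2 (i, j) := by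
        rw [hσ1, hσ2] at hA
        exact hA
      have hd := key.2.2 hA2
      obtain ⟨σ1, p1, d1⟩ := t1
      obtain ⟨σ2, p2, d2⟩ := t2
      simp only at key hd hσ1 hσ2
      rw [Prod.mk.injEq, Prod.mk.injEq]
      exact ⟨hσ1.trans hσ2.symm, key.1, hd⟩
    calc ∑ t ∈ F, hterm (kOf t.1 t.2.1 (i, j) - 1) (aOf t.1 t.2.1 t.2.2 (i, j))
        = ∑ t ∈ F, hterm m (aOf t.1 t.2.1 t.2.2 (i, j)) := by
          apply Finset.sum_congr rfl
          intro t ht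
          rw [(hkey t ht).1]
      _ = ∑ n ∈ F.image (fun t => aOf t.1 t.2.1 t.2.2 (i, j)), hterm m n := by
          rw [Finset.sum_image hinj]
      _ ≤ ∑ n ∈ Finset.range N, hterm m n := by
          apply Finset.sum_le_sum_of_subset_of_nonneg
          · intro n hn
            rw [Finset.mem_image] at hn
            obtain ⟨t, ht, rfl⟩ := hn
            rw [Finset.mem_range]
            have : aOf t.1 t.2.1 t.2.2 (i, j) ≤ (t.1 (oth t.2.1 (i, j)) : ℕ) := Nat.sub_le _ _
            have hlt := (t.1 (oth t.2.1 (i, j))).isLt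
            omega
          · intro n _ _
            exact hterm_nonneg m n
      _ ≤ Real.pi + 1 := hilbertRow m N

end ED
end EDPartC

noncomputable section EDExtra
namespace ED
open scoped Classical
variable {N : ℕ}

lemma xfun_repf_cmp (σ : Equiv.Perm (Fin N)) (p : Fin N) (d : ℕ)
    (hd : 1 ≤ d) (hr : d ≤ (σ p : ℕ)) (u v : Fin N) :
    (xfun σ p d u < xfun σ p d v) ↔ (repf σ p d u < repf σ p d v) := by
  unfold xfun
  rw [repf_apply, repf_apply]
  by_cases hu : u = p <;> by_cases hv : v = p
  · simp [hu, hv]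
  · have h1 := val_ne σ hv
    simp only [if_pos hu, if_neg hv]
    split_ifs <;> omega
  · have h1 := val_ne σ hu
    simp only [if_neg hu, if_pos hv]
    split_ifs <;> omega
  · have h1 := val_ne σ hu
    have h2 := val_ne σ hv
    simp only [if_neg hu, if_neg hv]
    split_ifs <;> omega

lemma yfun_injective (σ : Equiv.Perm (Fin N)) : Function.Injective (yfun σ) := by
  intro a b h
  unfold yfun at h
  exact σ.injective (Fin.val_injective (by omega))

lemma xfun_not_injective (σ : Equiv.Perm (Fin N)) (p : Fin N) (d : ℕ)
    (hd : 1 ≤ d) (hr : d ≤ (σ p : ℕ)) : ¬ Function.Injective (xfun σ p d) := by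
  intro hinj
  have hsub : (σ p : ℕ) - d < N := lt_of_le_of_lt (Nat.sub_le _ _) (σ p).isLt
  set q := σ.symm (⟨(σ p : ℕ) - d, hsub⟩ : Fin N) with hqd
  have hσq : σ q = ⟨(σ p : ℕ) - d, hsub⟩ := Equiv.apply_symm_apply σ _
  have hσqv : (σ q : ℕ) = (σ p : ℕ) - d := by rw [hσq]
  have hqp : q ≠ p := fun h => by rw [h] at hσqv; omega
  have : xfun σ p d q = xfun σ p d p := by
    unfold xfun
    rw [if_neg hqp, if_pos rfl, hσqv]
  exact hqp (hinj this)

lemma harmonic_sum : ∀ (n : ℕ),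
    ∑ r ∈ Finset.range n, (∑ k ∈ Finset.Icc 1 r, (1:ℝ)/k)
      = n * (∑ k ∈ Finset.Icc 1 n, (1:ℝ)/k) - n := by
  intro n
  induction n with
  | zero => simp
  | succ n ih =>
    rw [Finset.sum_range_succ, ih]
    have hstep : ∑ k ∈ Finset.Icc 1 (n+1), (1:ℝ)/k
        = (∑ k ∈ Finset.Icc 1 n, (1:ℝ)/k) + 1/(n+1) := by
      rw [Finset.sum_Icc_succ_top (by omega : 1 ≤ n + 1)]
      push_cast
      ring
    rw [hstep]
    push_cast
    have : ((n:ℝ) + 1) ≠ 0 := by positivity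
    field_simp
    ring

end ED
end EDExtra

noncomputable section EDMain
namespace ED
open scoped Classical
open Finset

variable {N M : ℕ} (U : EuclideanSpace ℂ (Fin M) ≃ₗᵢ[ℂ] EuclideanSpace ℂ (Fin M))
  (idx : Fin M → Fin N × Fin N) (init : EuclideanSpace ℂ (Fin M))

/-- The oracle sign of input `x` on the comparison `c`. -/
def sgn (x : Fin N → ℕ) (c : Fin N × Fin N) : ℂ := if x c.1 < x c.2 then -1 else 1

lemma conj_sgn (x : Fin N → ℕ) (c : Fin N × Fin N) :
    (starRingEnd ℂ) (sgn x c) = sgn x c := by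
  unfold sgn; split_ifs <;> simp

lemma sgn_repf (σ : Equiv.Perm (Fin N)) (p : Fin N) (d : ℕ)
    (hd : 1 ≤ d) (hr : d ≤ (σ p : ℕ)) (c : Fin N × Fin N) :
    sgn (repf σ p d) c = sgn (xfun σ p d) c := by
  unfold sgn
  exact if_congr ((xfun_repf_cmp σ p d hd hr c.1 c.2).symm) rfl rfl

lemma sgn_mul_of_not_dis (σ : Equiv.Perm (Fin N)) (p : Fin N) (d : ℕ)
    {c : Fin N × Fin N} (h : ¬ Dis σ p d c) :
    sgn (xfun σ p d) c * sgn (yfun σ) c = 1 := by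
  unfold Dis at h
  rw [not_not] at h
  unfold sgn
  by_cases h1 : yfun σ c.1 < yfun σ c.2
  · rw [if_pos (h.2 h1), if_pos h1]; ring
  · rw [if_neg (fun hx => h1 (h.1 hx)), if_neg h1]; ring

lemma sgn_mul_of_dis (σ : Equiv.Perm (Fin N)) (p : Fin N) (d : ℕ)
    {c : Fin N × Fin N} (h : Dis σ p d c) :
    sgn (xfun σ p d) c * sgn (yfun σ) c = -1 := by
  unfold Dis at h
  unfold sgn
  by_cases h1 : xfun σ p d c.1 < xfun σ p d c.2 <;>
    by_cases h2 : yfun σ c.1 < yfun σ c.2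
  · exact absurd (iff_of_true h1 h2) h
  · rw [if_pos h1, if_neg h2]; ring
  · rw [if_neg h1, if_pos h2]; ring
  · exact absurd (iff_of_false h1 h2) h

lemma cmpStateAfter_succ (x : Fin N → ℕ) (j : ℕ) :
    cmpStateAfter N M U idx x init (j+1)
      = U (cmpOracleApply N M x idx (cmpStateAfter N M U idx x init j)) := rfl

lemma oracle_coord (x : Fin N → ℕ) (ψ : EuclideanSpace ℂ (Fin M)) (b : Fin M) :
    cmpOracleApply N M x idx ψ b = sgn x (idx b) * ψ b := rfl

/-- Coordinate expansion of the inner product drop caused by one oracle call. -/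
lemma inner_drop (x y : Fin N → ℕ) (a b : EuclideanSpace ℂ (Fin M)) :
    (inner ℂ a b : ℂ) - (inner ℂ (cmpOracleApply N M x idx a) (cmpOracleApply N M y idx b) : ℂ)
      = ∑ c : Fin M, (1 - sgn x (idx c) * sgn y (idx c)) * (inner ℂ (a c) (b c) : ℂ) := by
  rw [PiLp.inner_apply, PiLp.inner_apply, ← Finset.sum_sub_distrib]
  apply Finset.sum_congr rfl
  intro c _
  rw [oracle_coord, oracle_coord]
  simp only [RCLike.inner_apply, map_mul, conj_sgn]
  ring

/-- Cauchy–Schwarz for finite real sums, square-root form. -/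
lemma cs_sqrt {ι : Type*} (s : Finset ι) (f g : ι → ℝ)
    (hf : ∀ i ∈ s, 0 ≤ f i) (hg : ∀ i ∈ s, 0 ≤ g i) :
    ∑ i ∈ s, f i * g i
      ≤ Real.sqrt (∑ i ∈ s, f i ^ 2) * Real.sqrt (∑ i ∈ s, g i ^ 2) := by
  have h2 := Finset.sum_mul_sq_le_sq_mul_sq s f g
  have h3 : 0 ≤ ∑ i ∈ s, f i * g i :=
    Finset.sum_nonneg fun i hi => mul_nonneg (hf i hi) (hg i hi)
  calc ∑ i ∈ s, f i * g i = Real.sqrt ((∑ i ∈ s, f i * g i)^2) := (Real.sqrt_sq h3).symm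
    _ ≤ Real.sqrt ((∑ i ∈ s, f i ^ 2) * (∑ i ∈ s, g i ^ 2)) := Real.sqrt_le_sqrt h2
    _ = _ := Real.sqrt_mul (Finset.sum_nonneg fun i _ => by positivity) _

lemma hterm_mul_self (m n : ℕ) :
    hterm m n * hterm n m = (1 / ((m:ℝ) + n + 1))^2 := by
  unfold hterm
  have h1 : (0:ℝ) < Real.sqrt (2*m+1) := Real.sqrt_pos.2 (by positivity)
  have h2 : (0:ℝ) < Real.sqrt (2*n+1) := Real.sqrt_pos.2 (by positivity)
  field_simp
  ring

/-- the weight `1/d` splits as the product of the square roots of the two Schur terms. -/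
lemma w_split (σ : Equiv.Perm (Fin N)) (p : Fin N) (d : ℕ)
    (hd : 1 ≤ d) (hr : d ≤ (σ p : ℕ)) {c : Fin N × Fin N} (hdis : Dis σ p d c) :
    (1 : ℝ) / d = Real.sqrt (hterm (aOf σ p d c) (kOf σ p c - 1))
      * Real.sqrt (hterm (kOf σ p c - 1) (aOf σ p d c)) := by
  obtain ⟨i, j⟩ := c
  have hf := dis_facts σ p d hd hr hdis
  set m := aOf σ p d (i, j)
  set k := kOf σ p (i, j)
  have hnat : m + (k - 1) + 1 = d := by omega
  have hcast : (m : ℝ) + ((k - 1 : ℕ) : ℝ) + 1 = (d : ℝ) := by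
    calc (m : ℝ) + ((k - 1 : ℕ) : ℝ) + 1 = ((m + (k - 1) + 1 : ℕ) : ℝ) := by push_cast; ring
      _ = (d : ℝ) := by rw [hnat]
  rw [← Real.sqrt_mul (hterm_nonneg _ _), hterm_mul_self, hcast]
  rw [Real.sqrt_sq (by positivity)]


lemma step_bound (hinit : ‖init‖ = 1) (hN : 1 ≤ N) (j : ℕ) :
    (∑ t ∈ Tset N, (1/(t.2.2 : ℝ)) *
        (inner ℂ (cmpStateAfter N M U idx (repf t.1 t.2.1 t.2.2) init j)
          (cmpStateAfter N M U idx (yfun t.1) init j) : ℂ).re)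
      - (∑ t ∈ Tset N, (1/(t.2.2 : ℝ)) *
        (inner ℂ (cmpStateAfter N M U idx (repf t.1 t.2.1 t.2.2) init (j+1))
          (cmpStateAfter N M U idx (yfun t.1) init (j+1)) : ℂ).re)
    ≤ 2 * Real.sqrt ((Real.pi + 1) * (((N:ℝ) - 1) * (Fintype.card (Equiv.Perm (Fin N))) / 2))
        * Real.sqrt ((Real.pi + 1) * (Fintype.card (Equiv.Perm (Fin N)))) := by
  classical
  set Ψ : (Fin N → ℕ) → ℕ → EuclideanSpace ℂ (Fin M) :=
    fun x jj => cmpStateAfter N M U idx x init jj with hΨd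
  set D : Fin M → Finset (Equiv.Perm (Fin N) × Fin N × ℕ) :=
    fun c => (Tset N).filter (fun t => Dis t.1 t.2.1 t.2.2 (idx c)) with hDd
  -- Step 1 : pointwise drop bound for each pair index t
  have hdrop : ∀ t ∈ Tset N,
      (1/(t.2.2 : ℝ)) * (inner ℂ (Ψ (repf t.1 t.2.1 t.2.2) j) (Ψ (yfun t.1) j) : ℂ).re
        - (1/(t.2.2 : ℝ)) * (inner ℂ (Ψ (repf t.1 t.2.1 t.2.2) (j+1)) (Ψ (yfun t.1) (j+1)) : ℂ).re
      ≤ ∑ c : Fin M, (if Dis t.1 t.2.1 t.2.2 (idx c) then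
          2 * (1/(t.2.2 : ℝ)) * (‖Ψ (repf t.1 t.2.1 t.2.2) j c‖ * ‖Ψ (yfun t.1) j c‖) else 0) := by
    intro t ht
    obtain ⟨hd, hr⟩ := mem_Tset.1 ht
    obtain ⟨σ, p, d⟩ := t
    simp only at hd hr ⊢
    have e1 : (inner ℂ (Ψ (repf σ p d) (j+1)) (Ψ (yfun σ) (j+1)) : ℂ)
        = inner ℂ (cmpOracleApply N M (repf σ p d) idx (Ψ (repf σ p d) j))
            (cmpOracleApply N M (yfun σ) idx (Ψ (yfun σ) j)) := by
      rw [hΨd]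
      simp only
      rw [cmpStateAfter_succ, cmpStateAfter_succ, LinearIsometryEquiv.inner_map_map]
    rw [← mul_sub, ← Complex.sub_re, e1, inner_drop, Complex.re_sum, Finset.mul_sum]
    apply Finset.sum_le_sum
    intro c _
    by_cases hdis : Dis σ p d (idx c)
    · rw [if_pos hdis]
      have hs : sgn (repf σ p d) (idx c) * sgn (yfun σ) (idx c) = -1 := by
        rw [sgn_repf σ p d hd hr]
        exact sgn_mul_of_dis σ p d hdis
      rw [hs]
      have h20 : ((1 : ℂ) - -1) = 2 := by norm_num
      rw [h20]
      have hz : ((2:ℂ) * (inner ℂ (Ψ (repf σ p d) j c) (Ψ (yfun σ) j c) : ℂ)).re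
          ≤ 2 * (‖Ψ (repf σ p d) j c‖ * ‖Ψ (yfun σ) j c‖) := by
        have h5 : ((2:ℂ) * (inner ℂ (Ψ (repf σ p d) j c) (Ψ (yfun σ) j c) : ℂ)).re
            = 2 * (inner ℂ (Ψ (repf σ p d) j c) (Ψ (yfun σ) j c) : ℂ).re := by
          simp [Complex.mul_re]
        have h6 : (inner ℂ (Ψ (repf σ p d) j c) (Ψ (yfun σ) j c) : ℂ).re
            ≤ ‖(inner ℂ (Ψ (repf σ p d) j c) (Ψ (yfun σ) j c) : ℂ)‖ := by
          exact Complex.re_le_norm _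
        have h7 : ‖(inner ℂ (Ψ (repf σ p d) j c) (Ψ (yfun σ) j c) : ℂ)‖
            ≤ ‖Ψ (repf σ p d) j c‖ * ‖Ψ (yfun σ) j c‖ := norm_inner_le_norm _ _
        rw [h5]; linarith
      have hw : (0:ℝ) ≤ 1/(d:ℝ) := by positivity
      calc (1/(d:ℝ)) * ((2:ℂ) * (inner ℂ (Ψ (repf σ p d) j c) (Ψ (yfun σ) j c) : ℂ)).re
          ≤ (1/(d:ℝ)) * (2 * (‖Ψ (repf σ p d) j c‖ * ‖Ψ (yfun σ) j c‖)) :=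
            mul_le_mul_of_nonneg_left hz hw
        _ = 2 * (1/(d:ℝ)) * (‖Ψ (repf σ p d) j c‖ * ‖Ψ (yfun σ) j c‖) := by ring
    · rw [if_neg hdis]
      have hs : sgn (repf σ p d) (idx c) * sgn (yfun σ) (idx c) = 1 := by
        rw [sgn_repf σ p d hd hr]
        exact sgn_mul_of_not_dis σ p d hdis
      rw [hs]
      simp
  -- Step 2 : sum over t, swap sums
  have h2 : (∑ t ∈ Tset N, (1/(t.2.2 : ℝ)) *
        (inner ℂ (Ψ (repf t.1 t.2.1 t.2.2) j) (Ψ (yfun t.1) j) : ℂ).re)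
      - (∑ t ∈ Tset N, (1/(t.2.2 : ℝ)) *
        (inner ℂ (Ψ (repf t.1 t.2.1 t.2.2) (j+1)) (Ψ (yfun t.1) (j+1)) : ℂ).re)
      ≤ ∑ c : Fin M, 2 * ∑ t ∈ D c,
          (1/(t.2.2 : ℝ)) * (‖Ψ (repf t.1 t.2.1 t.2.2) j c‖ * ‖Ψ (yfun t.1) j c‖) := by
    rw [← Finset.sum_sub_distrib]
    calc ∑ t ∈ Tset N, ((1/(t.2.2 : ℝ)) *
          (inner ℂ (Ψ (repf t.1 t.2.1 t.2.2) j) (Ψ (yfun t.1) j) : ℂ).re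
          - (1/(t.2.2 : ℝ)) *
          (inner ℂ (Ψ (repf t.1 t.2.1 t.2.2) (j+1)) (Ψ (yfun t.1) (j+1)) : ℂ).re)
        ≤ ∑ t ∈ Tset N, ∑ c : Fin M, (if Dis t.1 t.2.1 t.2.2 (idx c) then
            2 * (1/(t.2.2 : ℝ)) * (‖Ψ (repf t.1 t.2.1 t.2.2) j c‖ * ‖Ψ (yfun t.1) j c‖) else 0) :=
          Finset.sum_le_sum hdrop
      _ = ∑ c : Fin M, ∑ t ∈ Tset N, (if Dis t.1 t.2.1 t.2.2 (idx c) then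
            2 * (1/(t.2.2 : ℝ)) * (‖Ψ (repf t.1 t.2.1 t.2.2) j c‖ * ‖Ψ (yfun t.1) j c‖) else 0) :=
          Finset.sum_comm
      _ = ∑ c : Fin M, 2 * ∑ t ∈ D c,
            (1/(t.2.2 : ℝ)) * (‖Ψ (repf t.1 t.2.1 t.2.2) j c‖ * ‖Ψ (yfun t.1) j c‖) := by
          apply Finset.sum_congr rfl
          intro c _
          rw [hDd]
          simp only
          rw [Finset.sum_filter, Finset.mul_sum]
          apply Finset.sum_congr rfl
          intro t _
          split_ifs with h
          · ring
          · ring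
  -- the two grouped quadratic sums
  set X : Fin M → ℝ := fun c => ∑ t ∈ D c,
      hterm (aOf t.1 t.2.1 t.2.2 (idx c)) (kOf t.1 t.2.1 (idx c) - 1)
        * ‖Ψ (repf t.1 t.2.1 t.2.2) j c‖^2 with hXd
  set Y : Fin M → ℝ := fun c => ∑ t ∈ D c,
      hterm (kOf t.1 t.2.1 (idx c) - 1) (aOf t.1 t.2.1 t.2.2 (idx c))
        * ‖Ψ (yfun t.1) j c‖^2 with hYd
  have hXnn : ∀ c, 0 ≤ X c := fun c => Finset.sum_nonneg fun t _ => by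
    have := hterm_nonneg (aOf t.1 t.2.1 t.2.2 (idx c)) (kOf t.1 t.2.1 (idx c) - 1)
    positivity
  have hYnn : ∀ c, 0 ≤ Y c := fun c => Finset.sum_nonneg fun t _ => by
    have := hterm_nonneg (kOf t.1 t.2.1 (idx c) - 1) (aOf t.1 t.2.1 t.2.2 (idx c))
    positivity
  -- Step 3 : per-c Cauchy-Schwarz
  have h3 : ∀ c : Fin M, ∑ t ∈ D c,
      (1/(t.2.2 : ℝ)) * (‖Ψ (repf t.1 t.2.1 t.2.2) j c‖ * ‖Ψ (yfun t.1) j c‖)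
      ≤ Real.sqrt (X c) * Real.sqrt (Y c) := by
    intro c
    have hDsub : ∀ t ∈ D c, (1 ≤ t.2.2 ∧ t.2.2 ≤ (t.1 t.2.1 : ℕ)) ∧
        Dis t.1 t.2.1 t.2.2 (idx c) := by
      intro t ht
      rw [hDd] at ht
      simp only [Finset.mem_filter] at ht
      exact ⟨mem_Tset.1 ht.1, ht.2⟩
    calc ∑ t ∈ D c, (1/(t.2.2 : ℝ)) * (‖Ψ (repf t.1 t.2.1 t.2.2) j c‖ * ‖Ψ (yfun t.1) j c‖)
        = ∑ t ∈ D c,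
            (Real.sqrt (hterm (aOf t.1 t.2.1 t.2.2 (idx c)) (kOf t.1 t.2.1 (idx c) - 1))
              * ‖Ψ (repf t.1 t.2.1 t.2.2) j c‖)
            * (Real.sqrt (hterm (kOf t.1 t.2.1 (idx c) - 1) (aOf t.1 t.2.1 t.2.2 (idx c)))
              * ‖Ψ (yfun t.1) j c‖) := by
          apply Finset.sum_congr rfl
          intro t ht
          obtain ⟨⟨hd, hr⟩, hdis⟩ := hDsub t ht
          rw [w_split t.1 t.2.1 t.2.2 hd hr hdis]
          ring
      _ ≤ Real.sqrt (∑ t ∈ D c,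
            (Real.sqrt (hterm (aOf t.1 t.2.1 t.2.2 (idx c)) (kOf t.1 t.2.1 (idx c) - 1))
              * ‖Ψ (repf t.1 t.2.1 t.2.2) j c‖)^2)
          * Real.sqrt (∑ t ∈ D c,
            (Real.sqrt (hterm (kOf t.1 t.2.1 (idx c) - 1) (aOf t.1 t.2.1 t.2.2 (idx c)))
              * ‖Ψ (yfun t.1) j c‖)^2) := by
          apply cs_sqrt
          · intro t _; positivity
          · intro t _; positivity
      _ = Real.sqrt (X c) * Real.sqrt (Y c) := by
          rw [hXd, hYd]
          simp only
          congr 1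
          · congr 1
            apply Finset.sum_congr rfl
            intro t _
            rw [mul_pow, Real.sq_sqrt (hterm_nonneg _ _)]
          · congr 1
            apply Finset.sum_congr rfl
            intro t _
            rw [mul_pow, Real.sq_sqrt (hterm_nonneg _ _)]
  -- Step 4 : X mass bound
  have hXsum : ∑ c : Fin M, X c ≤ (Real.pi + 1) * (((N:ℝ) - 1) * (Fintype.card (Equiv.Perm (Fin N))) / 2) := by
    have hXc : ∀ c : Fin M, X c ≤ (Real.pi + 1) * ∑ f ∈ Labels N, ‖Ψ f j c‖^2 := by
      intro c
      rw [hXd]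
      simp only
      have hmaps : ∀ t ∈ D c, repf t.1 t.2.1 t.2.2 ∈ Labels N := by
        intro t ht
        rw [hDd] at ht
        simp only [Finset.mem_filter] at ht
        obtain ⟨hd, hr⟩ := mem_Tset.1 ht.1
        exact repf_mem_Labels t.2.2 t.1 t.2.1 hd hr
      rw [← Finset.sum_fiberwise_of_maps_to hmaps, Finset.mul_sum]
      apply Finset.sum_le_sum
      intro f _
      have e2 : ∑ t ∈ (D c).filter (fun t => repf t.1 t.2.1 t.2.2 = f),
          hterm (aOf t.1 t.2.1 t.2.2 (idx c)) (kOf t.1 t.2.1 (idx c) - 1)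
            * ‖Ψ (repf t.1 t.2.1 t.2.2) j c‖^2
          = (∑ t ∈ (D c).filter (fun t => repf t.1 t.2.1 t.2.2 = f),
            hterm (aOf t.1 t.2.1 t.2.2 (idx c)) (kOf t.1 t.2.1 (idx c) - 1)) * ‖Ψ f j c‖^2 := by
        rw [Finset.sum_mul]
        apply Finset.sum_congr rfl
        intro t ht
        rw [Finset.mem_filter] at ht
        rw [ht.2]
      rw [e2]
      apply mul_le_mul_of_nonneg_right _ (by positivity)
      have := fiberX_sum_le (N := N) (idx c).1 (idx c).2 f
      rw [Prod.mk.eta] at this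
      rw [hDd]
      simp only
      rw [Finset.filter_filter]
      exact this
    calc ∑ c : Fin M, X c ≤ ∑ c : Fin M, (Real.pi + 1) * ∑ f ∈ Labels N, ‖Ψ f j c‖^2 :=
          Finset.sum_le_sum fun c _ => hXc c
      _ = (Real.pi + 1) * ∑ f ∈ Labels N, ∑ c : Fin M, ‖Ψ f j c‖^2 := by
          rw [← Finset.mul_sum, Finset.sum_comm]
      _ = (Real.pi + 1) * (Labels N).card := by
          congr 1
          rw [Finset.sum_congr rfl (fun f _ => state_sum_sq U idx init hinit f j)]
          simp
      _ ≤ (Real.pi + 1) * (((N:ℝ) - 1) * (Fintype.card (Equiv.Perm (Fin N))) / 2) := by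
          apply mul_le_mul_of_nonneg_left _ (by positivity)
          · have hcard := card_Labels_le (N := N) hN
            have hN1 : (1:ℝ) ≤ (N:ℝ) := by exact_mod_cast hN
            have : ((Labels N).card : ℝ) * 2 ≤ ((N:ℕ) - 1 : ℕ) * (Fintype.card (Equiv.Perm (Fin N)) : ℝ) := by
              exact_mod_cast by
                calc (Labels N).card * 2 = 2 * (Labels N).card := by ring
                  _ ≤ (N - 1) * Fintype.card (Equiv.Perm (Fin N)) := hcard
            have hc : (((N:ℕ) - 1 : ℕ) : ℝ) = (N:ℝ) - 1 := by
              push_cast [Nat.cast_sub hN]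
              ring
            rw [hc] at this
            linarith
  -- Step 5 : Y mass bound
  have hYsum : ∑ c : Fin M, Y c ≤ (Real.pi + 1) * (Fintype.card (Equiv.Perm (Fin N))) := by
    have hYc : ∀ c : Fin M, Y c ≤ (Real.pi + 1) *
        ∑ σ ∈ (Finset.univ : Finset (Equiv.Perm (Fin N))), ‖Ψ (yfun σ) j c‖^2 := by
      intro c
      rw [hYd]
      simp only
      have hmaps : ∀ t ∈ D c, t.1 ∈ (Finset.univ : Finset (Equiv.Perm (Fin N))) :=
        fun t _ => Finset.mem_univ _
      rw [← Finset.sum_fiberwise_of_maps_to hmaps, Finset.mul_sum]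
      apply Finset.sum_le_sum
      intro σ _
      have e2 : ∑ t ∈ (D c).filter (fun t => t.1 = σ),
          hterm (kOf t.1 t.2.1 (idx c) - 1) (aOf t.1 t.2.1 t.2.2 (idx c))
            * ‖Ψ (yfun t.1) j c‖^2
          = (∑ t ∈ (D c).filter (fun t => t.1 = σ),
            hterm (kOf t.1 t.2.1 (idx c) - 1) (aOf t.1 t.2.1 t.2.2 (idx c))) * ‖Ψ (yfun σ) j c‖^2 := by
        rw [Finset.sum_mul]
        apply Finset.sum_congr rfl
        intro t ht
        rw [Finset.mem_filter] at ht
        rw [ht.2]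
      rw [e2]
      apply mul_le_mul_of_nonneg_right _ (by positivity)
      have := fiberY_sum_le (N := N) (idx c).1 (idx c).2 σ
      rw [Prod.mk.eta] at this
      rw [hDd]
      simp only
      rw [Finset.filter_filter]
      exact this
    calc ∑ c : Fin M, Y c ≤ ∑ c : Fin M, (Real.pi + 1) *
          ∑ σ ∈ (Finset.univ : Finset (Equiv.Perm (Fin N))), ‖Ψ (yfun σ) j c‖^2 :=
          Finset.sum_le_sum fun c _ => hYc c
      _ = (Real.pi + 1) * ∑ σ ∈ (Finset.univ : Finset (Equiv.Perm (Fin N))),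
            ∑ c : Fin M, ‖Ψ (yfun σ) j c‖^2 := by
          rw [← Finset.mul_sum, Finset.sum_comm]
      _ = (Real.pi + 1) * (Fintype.card (Equiv.Perm (Fin N))) := by
          congr 1
          rw [Finset.sum_congr rfl (fun σ _ => state_sum_sq U idx init hinit (yfun σ) j)]
          simp [Finset.card_univ]
  -- Step 6 : assemble
  calc (∑ t ∈ Tset N, (1/(t.2.2 : ℝ)) *
        (inner ℂ (Ψ (repf t.1 t.2.1 t.2.2) j) (Ψ (yfun t.1) j) : ℂ).re)
      - (∑ t ∈ Tset N, (1/(t.2.2 : ℝ)) *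
        (inner ℂ (Ψ (repf t.1 t.2.1 t.2.2) (j+1)) (Ψ (yfun t.1) (j+1)) : ℂ).re)
      ≤ ∑ c : Fin M, 2 * ∑ t ∈ D c,
          (1/(t.2.2 : ℝ)) * (‖Ψ (repf t.1 t.2.1 t.2.2) j c‖ * ‖Ψ (yfun t.1) j c‖) := h2
    _ ≤ ∑ c : Fin M, 2 * (Real.sqrt (X c) * Real.sqrt (Y c)) := by
        apply Finset.sum_le_sum
        intro c _
        have := h3 c
        linarith
    _ = 2 * ∑ c : Fin M, Real.sqrt (X c) * Real.sqrt (Y c) := by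
        rw [Finset.mul_sum]
    _ ≤ 2 * (Real.sqrt (∑ c : Fin M, X c) * Real.sqrt (∑ c : Fin M, Y c)) := by
        apply mul_le_mul_of_nonneg_left _ (by norm_num)
        have := cs_sqrt (Finset.univ : Finset (Fin M)) (fun c => Real.sqrt (X c))
          (fun c => Real.sqrt (Y c)) (fun c _ => Real.sqrt_nonneg _) (fun c _ => Real.sqrt_nonneg _)
        calc ∑ c : Fin M, Real.sqrt (X c) * Real.sqrt (Y c)
            ≤ Real.sqrt (∑ c : Fin M, (Real.sqrt (X c))^2)
              * Real.sqrt (∑ c : Fin M, (Real.sqrt (Y c))^2) := this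
          _ = Real.sqrt (∑ c : Fin M, X c) * Real.sqrt (∑ c : Fin M, Y c) := by
              congr 2
              · exact Finset.sum_congr rfl fun c _ => Real.sq_sqrt (hXnn c)
              · exact Finset.sum_congr rfl fun c _ => Real.sq_sqrt (hYnn c)
    _ ≤ 2 * Real.sqrt ((Real.pi + 1) * (((N:ℝ) - 1) * (Fintype.card (Equiv.Perm (Fin N))) / 2))
        * Real.sqrt ((Real.pi + 1) * (Fintype.card (Equiv.Perm (Fin N)))) := by
        have hs1 : Real.sqrt (∑ c : Fin M, X c)
            ≤ Real.sqrt ((Real.pi + 1) * (((N:ℝ) - 1) * (Fintype.card (Equiv.Perm (Fin N))) / 2)) :=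
          Real.sqrt_le_sqrt hXsum
        have hs2 : Real.sqrt (∑ c : Fin M, Y c)
            ≤ Real.sqrt ((Real.pi + 1) * (Fintype.card (Equiv.Perm (Fin N)))) :=
          Real.sqrt_le_sqrt hYsum
        have := mul_le_mul hs1 hs2 (Real.sqrt_nonneg _) (Real.sqrt_nonneg _)
        nlinarith [Real.sqrt_nonneg (∑ c : Fin M, X c), Real.sqrt_nonneg (∑ c : Fin M, Y c)]


lemma W0_eq :
    ∑ t ∈ Tset N, (1/(t.2.2 : ℝ))
      = (Fintype.card (Equiv.Perm (Fin N)) : ℝ)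
          * ((N:ℝ) * (∑ k ∈ Finset.Icc 1 N, (1:ℝ)/k) - N) := by
  classical
  have h1 : ∑ t ∈ Tset N, (1/(t.2.2 : ℝ))
      = ∑ σ ∈ (Finset.univ : Finset (Equiv.Perm (Fin N))), ∑ p : Fin N,
          ∑ dd ∈ Finset.Icc 1 ((σ p : ℕ)), (1/(dd : ℝ)) := by
    unfold Tset
    rw [Finset.sum_filter, Finset.sum_product]
    apply Finset.sum_congr rfl
    intro σ _
    rw [Finset.sum_product]
    apply Finset.sum_congr rfl
    intro p _
    have hIcc : Finset.Icc 1 ((σ p : ℕ)) = (Finset.range N).filter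
        (fun dd => 1 ≤ dd ∧ dd ≤ (σ p : ℕ)) := by
      ext dd
      simp only [Finset.mem_Icc, Finset.mem_filter, Finset.mem_range]
      have := (σ p).isLt
      omega
    rw [hIcc, Finset.sum_filter]
  rw [h1]
  have h2 : ∀ σ : Equiv.Perm (Fin N), ∑ p : Fin N, ∑ dd ∈ Finset.Icc 1 ((σ p : ℕ)), (1/(dd : ℝ))
      = (N:ℝ) * (∑ k ∈ Finset.Icc 1 N, (1:ℝ)/k) - N := by
    intro σ
    have h3 : ∑ p : Fin N, ∑ dd ∈ Finset.Icc 1 ((σ p : ℕ)), (1/(dd : ℝ))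
        = ∑ v : Fin N, ∑ dd ∈ Finset.Icc 1 ((v : ℕ)), (1/(dd : ℝ)) :=
      Equiv.sum_comp σ (fun v => ∑ dd ∈ Finset.Icc 1 ((v : ℕ)), (1/(dd : ℝ)))
    rw [h3, Fin.sum_univ_eq_sum_range (fun r => ∑ dd ∈ Finset.Icc 1 r, (1/(dd : ℝ))) N]
    exact harmonic_sum N
  rw [Finset.sum_congr rfl (fun σ _ => h2 σ), Finset.sum_const, Finset.card_univ,
    nsmul_eq_mul]

end ED
end EDMain

open scoped Classical in
/-- Lower bound for element distinctness: any comparison-based quantum algorithm that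
decides, for every list `x` of `N` numbers, whether all entries are distinct, with error
probability at most `ε`, uses at least `(1 − 2√(ε(1−ε)))·√N·(H_N − 1)/(2π)` comparisons. -/
theorem element_distinctness_lower_bound
    (N M T : ℕ) (hN : 0 < N) (ε : ℝ) (hε0 : 0 ≤ ε) (hε1 : ε ≤ 1 / 2)
    (U : EuclideanSpace ℂ (Fin M) ≃ₗᵢ[ℂ] EuclideanSpace ℂ (Fin M))
    (idx : Fin M → Fin N × Fin N) (ans : Fin M → Bool)
    (init : EuclideanSpace ℂ (Fin M)) (hinit : ‖init‖ = 1)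
    (hcorrect : ∀ x : Fin N → ℕ,
      1 - ε ≤ successProb ans (decide (Function.Injective x))
        (cmpStateAfter N M U idx x init T)) :
    (1 - 2 * Real.sqrt (ε * (1 - ε))) * Real.sqrt N *
        ((∑ k ∈ Finset.Icc 1 N, (1 : ℝ) / k) - 1) / (2 * Real.pi) ≤ (T : ℝ) := by
  classical
  rcases eq_or_lt_of_le (Nat.succ_le_of_lt hN) with hN1 | hN2
  · -- N = 1 : the bound is trivial
    have hNeq : N = 1 := by omega
    subst hNeq
    have hsum : (∑ k ∈ Finset.Icc (1:ℕ) 1, (1:ℝ)/(k:ℕ)) = 1 := by simp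
    rw [hsum]
    norm_num
  · -- 2 ≤ N
    set H : ℝ := ∑ k ∈ Finset.Icc 1 N, (1 : ℝ) / k with hHd
    set β : ℝ := 2 * Real.sqrt (ε * (1 - ε)) with hβd
    have hβ0 : 0 ≤ β := by rw [hβd]; positivity
    have hβ1 : β ≤ 1 := by
      rw [hβd]
      have h1 : ε * (1-ε) ≤ 1/4 := by nlinarith
      have h2 : Real.sqrt (ε*(1-ε)) ≤ Real.sqrt (1/4) := Real.sqrt_le_sqrt h1
      have h3 : Real.sqrt (1/4 : ℝ) = 1/2 := by
        rw [show (1/4 : ℝ) = (1/2)^2 by norm_num, Real.sqrt_sq (by norm_num)]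
      rw [h3] at h2
      linarith
    have hN1 : 1 ≤ N := hN
    have hN2' : (2:ℕ) ≤ N := hN2
    have hNR : (2:ℝ) ≤ (N:ℝ) := by exact_mod_cast hN2'
    have hH1 : 1 ≤ H := by
      rw [hHd]
      calc (1:ℝ) = 1/((1:ℕ):ℝ) := by norm_num
        _ ≤ ∑ k ∈ Finset.Icc 1 N, (1:ℝ)/k :=
          Finset.single_le_sum (f := fun k : ℕ => (1:ℝ)/k)
            (fun k _ => by positivity) (Finset.mem_Icc.2 ⟨le_refl 1, hN1⟩)
    set P := (Fintype.card (Equiv.Perm (Fin N)) : ℝ) with hPd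
    have hP0 : (0:ℝ) < P := by rw [hPd]; exact_mod_cast Fintype.card_pos
    set W : ℕ → ℝ := fun j => ∑ t ∈ ED.Tset N, (1/(t.2.2 : ℝ)) *
        (inner ℂ (cmpStateAfter N M U idx (ED.repf t.1 t.2.1 t.2.2) init j)
          (cmpStateAfter N M U idx (ED.yfun t.1) init j) : ℂ).re with hWd
    set q1 : ℝ := (Real.pi + 1) * (((N:ℝ) - 1) * P / 2) with hq1d
    set q2 : ℝ := (Real.pi + 1) * P with hq2d
    set Δ : ℝ := 2 * Real.sqrt q1 * Real.sqrt q2 with hΔd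
    have hq1pos : 0 < q1 := by
      rw [hq1d]
      have : (0:ℝ) < (N:ℝ) - 1 := by linarith
      positivity
    have hq2pos : 0 < q2 := by rw [hq2d]; positivity
    have hΔpos : 0 < Δ := by
      rw [hΔd]
      have := Real.sqrt_pos.2 hq1pos
      have := Real.sqrt_pos.2 hq2pos
      positivity
    have hstep : ∀ j, W j - W (j+1) ≤ Δ := by
      intro j
      simp only [hWd, hΔd, hq1d, hq2d]
      exact ED.step_bound U idx init hinit hN1 j
    have htel : ∀ n : ℕ, W 0 - W n ≤ n * Δ := by
      intro n
      induction n with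
      | zero => simp
      | succ n ih =>
        have := hstep n
        push_cast
        push_cast at ih
        nlinarith [hΔpos]
    have hW0 : W 0 = ∑ t ∈ ED.Tset N, (1/(t.2.2 : ℝ)) := by
      rw [hWd]
      apply Finset.sum_congr rfl
      intro t _
      have e2 : (inner ℂ (cmpStateAfter N M U idx (ED.repf t.1 t.2.1 t.2.2) init 0)
          (cmpStateAfter N M U idx (ED.yfun t.1) init 0) : ℂ).re = 1 := by
        show (inner ℂ (U init) (U init) : ℂ).re = 1
        have h4 := inner_self_eq_norm_sq (𝕜 := ℂ) (x := U init)
        simp only [RCLike.re_to_complex] at h4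
        rw [h4, U.norm_map, hinit]
        norm_num
      rw [e2, mul_one]
    have hWsum : ∑ t ∈ ED.Tset N, (1/(t.2.2 : ℝ)) = P * ((N:ℝ) * H - N) := by
      rw [hHd, hPd]
      exact ED.W0_eq
    have hWT : W T ≤ β * (P * ((N:ℝ) * H - N)) := by
      rw [← hWsum, hWd]
      have hb : ∀ t ∈ ED.Tset N, (1/(t.2.2 : ℝ)) *
          (inner ℂ (cmpStateAfter N M U idx (ED.repf t.1 t.2.1 t.2.2) init T)
            (cmpStateAfter N M U idx (ED.yfun t.1) init T) : ℂ).re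
          ≤ (1/(t.2.2 : ℝ)) * β := by
        intro t ht
        obtain ⟨hd, hr⟩ := ED.mem_Tset.1 ht
        obtain ⟨σ, p, d⟩ := t
        simp only at hd hr ⊢
        have hstate : cmpStateAfter N M U idx (ED.repf σ p d) init T
            = cmpStateAfter N M U idx (ED.xfun σ p d) init T :=
          ED.state_congr U idx init _ _
            (fun u v => (ED.xfun_repf_cmp σ p d hd hr u v).symm) T
        rw [hstate]
        apply mul_le_mul_of_nonneg_left _ (by positivity)
        rw [hβd]
        apply ED.overlap ans _ _ ε hε0 hε1
          (ED.state_sum_sq U idx init hinit _ T) (ED.state_sum_sq U idx init hinit _ T)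
        · have hc := hcorrect (ED.xfun σ p d)
          have hdec : decide (Function.Injective (ED.xfun σ p d)) = false :=
            decide_eq_false (ED.xfun_not_injective σ p d hd hr)
          rw [hdec] at hc
          unfold successProb at hc
          exact hc
        · have hc := hcorrect (ED.yfun σ)
          have hdec : decide (Function.Injective (ED.yfun σ)) = true :=
            decide_eq_true (ED.yfun_injective σ)
          rw [hdec] at hc
          unfold successProb at hc
          exact hc
      calc ∑ t ∈ ED.Tset N, (1/(t.2.2 : ℝ)) *
            (inner ℂ (cmpStateAfter N M U idx (ED.repf t.1 t.2.1 t.2.2) init T)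
              (cmpStateAfter N M U idx (ED.yfun t.1) init T) : ℂ).re
          ≤ ∑ t ∈ ED.Tset N, (1/(t.2.2 : ℝ)) * β := Finset.sum_le_sum hb
        _ = β * ∑ t ∈ ED.Tset N, (1/(t.2.2 : ℝ)) := by
            rw [← Finset.sum_mul]; ring
    have hmain : (1 - β) * (P * ((N:ℝ) * H - N)) ≤ T * Δ := by
      have h1 := htel T
      rw [hW0, hWsum] at h1
      linarith [hWT]
    -- the final numeric comparison
    have hcore : Real.sqrt (N:ℝ) * Δ ≤ 2 * Real.pi * (P * (N:ℝ)) := by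
      rw [hΔd]
      have e1 : Real.sqrt (N:ℝ) * (2 * Real.sqrt q1 * Real.sqrt q2)
          = 2 * Real.sqrt ((N:ℝ) * (q1 * q2)) := by
        rw [Real.sqrt_mul (by positivity) (q1 * q2),
          Real.sqrt_mul (le_of_lt hq1pos) q2]
        ring
      rw [e1]
      have hval : (N:ℝ) * (q1 * q2) ≤ (Real.pi * (P * (N:ℝ)))^2 := by
        rw [hq1d, hq2d]
        have hπ := Real.pi_gt_d6
        have hin : (Real.pi+1)^2 * ((N:ℝ) - 1) ≤ 2 * Real.pi^2 * (N:ℝ) := by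
          nlinarith [hNR]
        have hfac : (0:ℝ) ≤ P^2 * (N:ℝ) / 2 := by positivity
        calc (N:ℝ) * (((Real.pi+1) * (((N:ℝ)-1)*P/2)) * ((Real.pi+1)*P))
            = ((Real.pi+1)^2 * ((N:ℝ)-1)) * (P^2*(N:ℝ)/2) := by ring
          _ ≤ (2 * Real.pi^2 * (N:ℝ)) * (P^2*(N:ℝ)/2) :=
              mul_le_mul_of_nonneg_right hin hfac
          _ = (Real.pi * (P * (N:ℝ)))^2 := by ring
      calc 2 * Real.sqrt ((N:ℝ) * (q1 * q2))
          ≤ 2 * Real.sqrt ((Real.pi * (P * (N:ℝ)))^2) := by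
            have := Real.sqrt_le_sqrt hval
            linarith
        _ = 2 * (Real.pi * (P * (N:ℝ))) := by
            rw [Real.sqrt_sq (by positivity)]
        _ = 2 * Real.pi * (P * (N:ℝ)) := by ring
    have hπpos := Real.pi_pos
    have hkey : ((1 - β) * Real.sqrt (N:ℝ) * (H - 1) / (2 * Real.pi)) * Δ
        ≤ (1 - β) * (P * ((N:ℝ) * H - N)) := by
      have hcoef : (0:ℝ) ≤ (1 - β) * (H - 1) / (2 * Real.pi) :=
        div_nonneg (mul_nonneg (by linarith) (by linarith)) (by positivity)
      calc ((1 - β) * Real.sqrt (N:ℝ) * (H - 1) / (2 * Real.pi)) * Δ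
          = ((1 - β) * (H - 1) / (2 * Real.pi)) * (Real.sqrt (N:ℝ) * Δ) := by ring
        _ ≤ ((1 - β) * (H - 1) / (2 * Real.pi)) * (2 * Real.pi * (P * (N:ℝ))) :=
            mul_le_mul_of_nonneg_left hcore hcoef
        _ = (1 - β) * (P * ((N:ℝ) * H - N)) := by
            field_simp
    have hfinal : ((1 - β) * Real.sqrt (N:ℝ) * (H - 1) / (2 * Real.pi)) * Δ ≤ (T:ℝ) * Δ :=
      le_trans hkey hmain
    have := le_of_mul_le_mul_right hfinal hΔpos
    rw [hHd, hβd] at this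
    exact this
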